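/- arXiv:1407.5647 — 9 statements merged into one kernel-verified Lean document; each statement's English description precedes it below -/
import Mathlib

section
/- Let R be a topological ring admitting a sequence of units converging to 0. Let M and N be Hausdorff topological R-modules each having a countable fundamental system of open neighbourhoods of 0 (equivalently, first-countable), with M complete. If u : M → N is a continuous R-linear map, N is complete, and u is surjective, then u is an open map. -/
/-!
Baire category gives "almost openness": since units tending to `0` let every neighbourhood `V`
of `0` in `M` absorb each point, `N` is the countable union of the closed sets
`r⁻¹ • closure (u '' V)`, so one of them, hence `closure (u '' V)` itself, has interior, and
`closure (u '' V) - closure (u '' V)` is a neighbourhood of `0`. Completeness of `M` then removes the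
closure (Banach–Schauder): for a basis `U n` of neighbourhoods with `U (n+1) + U (n+1) ⊆ U n`, a
point of `closure (u '' U 1)` is approximated successively by `u (z₀ + ⋯ + zₙ)` with `zₙ ∈ U (n+1)`;
the partial sums are Cauchy and their limit is a preimage lying in `closure (U 0)`.
-/

open Filter Set Topology Pointwise

theorem Filter.Tendsto.closure_smallSets {α X : Type*} [TopologicalSpace X] [RegularSpace X]
    {l : Filter α} {t : α → Set X} {x : X} (h : Tendsto t l (𝓝 x).smallSets) :
    Tendsto (fun a => closure (t a)) l (𝓝 x).smallSets := by
  rw [tendsto_smallSets_iff] at h ⊢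
  intro s hs
  obtain ⟨C, hC, hC_closed, hCs⟩ := exists_mem_nhds_isClosed_subset hs
  filter_upwards [h C hC] with a ha
  exact (closure_minimal ha hC_closed).trans hCs

theorem sub_mem_nhds_zero_of_nonempty_interior {G : Type*} [AddGroup G] [TopologicalSpace G]
    [IsTopologicalAddGroup G] {A : Set G} (hA : (interior A).Nonempty) : A - A ∈ 𝓝 0 := by
  obtain ⟨y, hy⟩ := hA
  have := (isOpenMap_sub_right y).image_mem_nhds (mem_interior_iff_mem_nhds.1 hy)
  rw [sub_self] at this
  exact mem_of_superset this (image_subset_iff.2 fun a ha => sub_mem_sub ha (interior_subset hy))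

section Telescoping

variable {G : Type*} [AddGroup G]

theorem sub_mem_of_sub_succ_mem {u : ℕ → Set G} (hu0 : ∀ n, (0 : G) ∈ u n)
    (hadd : ∀ n, u (n + 1) + u (n + 1) ⊆ u n) {s : ℕ → G}
    (hs : ∀ n, s (n + 1) - s n ∈ u (n + 1)) {m n : ℕ} (hmn : m ≤ n) :
    s n - s m ∈ u m := by
  induction hmn using Nat.decreasingInduction with
  | self => simpa using hu0 n
  | of_succ k _ ih => simpa using hadd k (add_mem_add ih (hs k))

theorem cauchySeq_of_sub_succ_mem [UniformSpace G] [IsUniformAddGroup G] {u : ℕ → Set G}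
    (hu : (𝓝 (0 : G)).HasAntitoneBasis u) (hadd : ∀ n, u (n + 1) + u (n + 1) ⊆ u n)
    {s : ℕ → G} (hs : ∀ n, s (n + 1) - s n ∈ u (n + 1)) : CauchySeq s :=
  hu.toHasBasis.uniformity_of_nhds_zero_swapped.cauchySeq_iff'.2 fun i _ =>
    ⟨i, fun _ hn => sub_mem_of_sub_succ_mem (fun k => mem_of_mem_nhds (hu.mem k)) hadd hs hn⟩

end Telescoping

section BanachSchauder

variable {G H F : Type*} [AddGroup G] [AddCommGroup H] [TopologicalSpace H]
  [IsTopologicalAddGroup H] [FunLike F G H] [AddMonoidHomClass F G H]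

theorem exists_seq_sub_succ_mem_of_mem_closure_image {u : ℕ → Set G} (f : F)
    (hcl : ∀ n, closure (f '' u n) ∈ 𝓝 (0 : H)) {y : H} (hy : y ∈ closure (f '' u 1)) :
    ∃ s : ℕ → G, (∀ n, s (n + 1) - s n ∈ u (n + 1)) ∧ s 0 = 0 ∧
      ∀ n, y - f (s n) ∈ closure (f '' u (n + 1)) := by
  have step : ∀ n (x : G), y - f x ∈ closure (f '' u (n + 1)) →
      ∃ z ∈ u (n + 1), y - f (z + x) ∈ closure (f '' u (n + 2)) := by
    intro n x hx
    obtain ⟨-, ⟨z, hz, rfl⟩, hyz⟩ :=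
      mem_closure_iff_nhds_zero.1 hx _ (neg_mem_nhds_zero _ (hcl (n + 2)))
    exact ⟨z, hz, by simpa [map_add, sub_add_eq_sub_sub_swap] using hyz⟩
  choose! next next_mem next_spec using step
  let s : ℕ → G := fun n => Nat.rec 0 (fun n x => next n x + x) n
  have hs : ∀ n, y - f (s n) ∈ closure (f '' u (n + 1)) := by
    intro n
    induction n with
    | zero => simpa [s] using hy
    | succ n ih => exact next_spec n (s n) ih
  refine ⟨s, fun n => ?_, rfl, hs⟩
  rw [show s (n + 1) = next n (s n) + s n from rfl, add_sub_cancel_right]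
  exact next_mem n (s n) (hs n)

theorem closure_image_subset_image_closure [UniformSpace G] [IsUniformAddGroup G]
    [CompleteSpace G] [T2Space H] {u : ℕ → Set G}
    (hu : (𝓝 (0 : G)).HasAntitoneBasis u) (hadd : ∀ n, u (n + 1) + u (n + 1) ⊆ u n)
    {f : F} (hf : Continuous f) (hcl : ∀ n, closure (f '' u n) ∈ 𝓝 (0 : H)) :
    closure (f '' u 1) ⊆ f '' closure (u 0) := by
  intro y hy
  obtain ⟨s, hs_succ, hs0, hs_approx⟩ := exists_seq_sub_succ_mem_of_mem_closure_image f hcl hy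
  obtain ⟨x, hx⟩ := cauchySeq_tendsto_of_complete (cauchySeq_of_sub_succ_mem hu hadd hs_succ)
  have hs_mem : ∀ n, s n ∈ u 0 := fun n => by
    simpa [hs0] using sub_mem_of_sub_succ_mem (fun k => mem_of_mem_nhds (hu.mem k)) hadd hs_succ
      (Nat.zero_le n)
  have hclosure : Tendsto (fun n => closure (f '' u (n + 1))) atTop (𝓝 (0 : H)).smallSets := by
    have := ((hf.tendsto 0).image_smallSets.comp hu.tendsto_smallSets).closure_smallSets
    rw [map_zero] at this
    exact this.comp (tendsto_add_atTop_nat 1)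
  have hy_lim : Tendsto (fun n => f (s n)) atTop (𝓝 y) := by
    simpa using (hclosure.of_smallSets (Eventually.of_forall hs_approx)).const_sub y
  exact ⟨x, mem_closure_of_tendsto hx (Eventually.of_forall hs_mem),
    tendsto_nhds_unique ((hf.tendsto x).comp hx) hy_lim⟩

theorem isOpenMap_of_closure_image_mem_nhds [UniformSpace G] [IsUniformAddGroup G]
    [FirstCountableTopology G] [CompleteSpace G] [T2Space H] {f : F} (hf : Continuous f)
    (hcl : ∀ W ∈ 𝓝 (0 : G), closure (f '' W) ∈ 𝓝 (0 : H)) : IsOpenMap f := by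
  refine IsTopologicalAddGroup.isOpenMap_iff_nhds_zero.2 (le_map fun W hW => ?_)
  obtain ⟨u, hu, hadd⟩ := IsTopologicalAddGroup.exists_antitone_basis_nhds_zero G
  obtain ⟨C, hC, hC_closed, hCW⟩ := exists_mem_nhds_isClosed_subset hW
  obtain ⟨k, hk⟩ := hu.mem_iff.1 hC
  have hv : (𝓝 (0 : G)).HasAntitoneBasis (fun n => u (k + n)) :=
    hu.comp_mono (fun _ _ h => Nat.add_le_add_left h k)
      (tendsto_atTop_mono (fun n => Nat.le_add_left n k) tendsto_id)
  refine mem_of_superset (hcl _ (hv.mem 1)) ((closure_image_subset_image_closure hv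
    (fun n => hadd (k + n)) hf fun n => hcl _ (hv.mem n)).trans (image_mono ?_))
  simpa using (closure_minimal hk hC_closed).trans hCW

end BanachSchauder

section Baire

variable {R M N : Type*} [Semiring R] [TopologicalSpace R]
  [AddCommGroup M] [Module R M] [TopologicalSpace M] [ContinuousSMul R M]
  [AddCommGroup N] [Module R N] [TopologicalSpace N] [ContinuousConstSMul R N] [BaireSpace N]

theorem nonempty_interior_closure_image_of_surjective
    {r : ℕ → Rˣ} (hr : Tendsto (fun n => (r n : R)) atTop (𝓝 0)) {u : M →ₗ[R] N}
    (hsurj : Function.Surjective u) {V : Set M} (hV : V ∈ 𝓝 0) :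
    (interior (closure (u '' V))).Nonempty := by
  have hcover : ⋃ n, (r n)⁻¹ • closure (u '' V) = univ := by
    refine eq_univ_of_forall fun y => ?_
    obtain ⟨x, rfl⟩ := hsurj y
    obtain ⟨n, hn⟩ := ((hr.smul_const x).eventually_mem (by simpa using hV)).exists
    refine mem_iUnion.2 ⟨n, mem_inv_smul_set_iff.2 (subset_closure ⟨_, hn, ?_⟩)⟩
    simp [Units.smul_def]
  obtain ⟨n, hn⟩ :=
    nonempty_interior_of_iUnion_of_closed (fun n => isClosed_closure.smul _) hcover
  rw [interior_smul] at hn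
  exact smul_set_nonempty.1 hn

theorem closure_image_mem_nhds_of_surjective [IsTopologicalAddGroup M] [IsTopologicalAddGroup N]
    {r : ℕ → Rˣ} (hr : Tendsto (fun n => (r n : R)) atTop (𝓝 0)) {u : M →ₗ[R] N}
    (hsurj : Function.Surjective u) {W : Set M} (hW : W ∈ 𝓝 0) :
    closure (u '' W) ∈ 𝓝 0 := by
  obtain ⟨V, hV, hVW⟩ := exists_nhds_half_neg hW
  refine mem_of_superset (sub_mem_nhds_zero_of_nonempty_interior
    (nonempty_interior_closure_image_of_surjective hr hsurj hV)) ?_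
  rintro - ⟨a, ha, b, hb, rfl⟩
  refine map_mem_closure₂ continuous_sub ha hb ?_
  rintro - ⟨v, hv, rfl⟩ - ⟨w, hw, rfl⟩
  exact ⟨v - w, hVW v hv w hw, map_sub u v w⟩

end Baire

theorem open_mapping_of_surjective_general
    {R : Type*} [Ring R] [TopologicalSpace R]
    (hR : ∃ r : ℕ → Rˣ, Filter.Tendsto (fun n => (r n : R)) Filter.atTop (nhds 0))
    {M N : Type*}
    [AddCommGroup M] [Module R M] [UniformSpace M] [IsUniformAddGroup M]
    [ContinuousSMul R M] [FirstCountableTopology M]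
    [CompleteSpace M]
    [AddCommGroup N] [Module R N] [UniformSpace N] [IsUniformAddGroup N]
    [ContinuousSMul R N] [T2Space N] [FirstCountableTopology N]
    [CompleteSpace N]
    (u : M →ₗ[R] N) (hu : Continuous u) (hsurj : Function.Surjective u) :
    IsOpenMap u := by
  obtain ⟨r, hr⟩ := hR
  -- a complete uniform space with countably generated uniformity is a Baire space
  have := IsUniformAddGroup.uniformity_countably_generated (α := N)
  exact isOpenMap_of_closure_image_mem_nhds hu fun W hW =>
    closure_image_mem_nhds_of_surjective hr hsurj hW

/-- **Open Mapping Theorem** (direction 1 ⇒ 4): over a topological ring with a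
sequence of units converging to zero, a continuous surjective linear map between
complete, Hausdorff, first-countable topological modules is open. -/
theorem open_mapping_of_surjective
    {R : Type*} [Ring R] [TopologicalSpace R] [IsTopologicalRing R]
    (hR : ∃ r : ℕ → Rˣ, Filter.Tendsto (fun n => (r n : R)) Filter.atTop (nhds 0))
    {M N : Type*}
    [AddCommGroup M] [Module R M] [UniformSpace M] [IsUniformAddGroup M]
    [ContinuousSMul R M] [T2Space M] [FirstCountableTopology M]
    [CompleteSpace M]
    [AddCommGroup N] [Module R N] [UniformSpace N] [IsUniformAddGroup N]
    [ContinuousSMul R N] [T2Space N] [FirstCountableTopology N]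
    [CompleteSpace N]
    (u : M →ₗ[R] N) (hu : Continuous u) (hsurj : Function.Surjective u) :
    IsOpenMap u :=
  open_mapping_of_surjective_general hR u hu hsurj
end

section
/- Let R be a topological ring admitting a sequence (r_n) of units converging to 0. Let M and N be topological R-modules and u : M → N an R-linear map such that the image u(M) is not a meagre subset of N. Then for every neighbourhood V of 0 in M, the closure of u(V) in N is a neighbourhood of 0 in N. -/
/-! Since the units `r n` tend to `0`, every neighbourhood `W` of `0` in `M` absorbs each point,
so `M = ⋃ n, (r n)⁻¹ • W` and the range of `u` is covered by the countably many sets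
`(r n)⁻¹ • u(W)`. As the range is not meagre, one of their closures has an interior point, and
hence so does `closure (u W)`, scaling by a unit being a homeomorphism. If `U` is that interior,
`U - U` is an open neighbourhood of `0` inside `closure (u W - u W)`; choosing `W - W ⊆ V` ends
the proof. -/

open Filter Topology Pointwise

theorem iUnion_inv_smul_eq_univ_of_tendsto_zero {R M : Type*} [MonoidWithZero R]
    [TopologicalSpace R] [Zero M] [MulActionWithZero R M] [TopologicalSpace M]
    [ContinuousSMul R M] {r : ℕ → Rˣ} (hr : Tendsto (fun n => (r n : R)) atTop (𝓝 0))
    {W : Set M} (hW : W ∈ 𝓝 0) : ⋃ n, (r n)⁻¹ • W = Set.univ := by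
  refine Set.eq_univ_of_forall fun m => Set.mem_iUnion.2 ?_
  have hrm : Tendsto (fun n => (r n : R) • m) atTop (𝓝 0) := by
    simpa only [zero_smul] using hr.smul_const m
  obtain ⟨n, hn⟩ := (hrm.eventually_mem hW).exists
  exact ⟨n, Set.mem_inv_smul_set_iff.2 hn⟩

theorem exists_nonempty_interior_closure_of_not_isMeagre {X ι : Type*} [TopologicalSpace X]
    [Countable ι] {s : Set X} {t : ι → Set X} (hs : ¬IsMeagre s) (hst : s ⊆ ⋃ i, t i) :
    ∃ i, (interior (closure (t i))).Nonempty := by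
  by_contra! h
  exact hs <| (isMeagre_iUnion fun i => IsNowhereDense.isMeagre (h i)).mono hst

theorem closure_sub_closure_subset {G : Type*} [Sub G] [TopologicalSpace G] [ContinuousSub G]
    (s t : Set G) : closure s - closure t ⊆ closure (s - t) :=
  Set.sub_subset_iff.2 fun _ ha _ hb =>
    map_mem_closure₂ continuous_sub ha hb fun _ hx _ hy => Set.sub_mem_sub hx hy

theorem closure_sub_self_mem_nhds_zero {G : Type*} [AddGroup G] [TopologicalSpace G]
    [IsTopologicalAddGroup G] {s : Set G} (hs : (interior (closure s)).Nonempty) :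
    closure (s - s) ∈ 𝓝 (0 : G) := by
  obtain ⟨y, hy⟩ := hs
  have hopen : interior (closure s) - interior (closure s) ∈ 𝓝 (0 : G) :=
    isOpen_interior.sub_left.mem_nhds ⟨y, hy, y, hy, sub_self y⟩
  exact mem_of_superset hopen <|
    (Set.sub_subset_sub interior_subset interior_subset).trans (closure_sub_closure_subset s s)

theorem closure_image_nhds_of_not_meagre_general
    {R : Type*} [Ring R] [TopologicalSpace R]
    (hR : ∃ r : ℕ → Rˣ, Filter.Tendsto (fun n => (r n : R)) Filter.atTop (nhds 0))
    {M N : Type*}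
    [AddCommGroup M] [Module R M] [TopologicalSpace M] [IsTopologicalAddGroup M]
    [ContinuousSMul R M]
    [AddCommGroup N] [Module R N] [TopologicalSpace N] [IsTopologicalAddGroup N]
    [ContinuousSMul R N]
    (u : M →ₗ[R] N) (h : ¬ IsMeagre (Set.range u)) :
    ∀ V ∈ nhds (0 : M), closure (u '' V) ∈ nhds (0 : N) := by
  obtain ⟨r, hr⟩ := hR
  intro V hV
  obtain ⟨W, hW, hWV⟩ := exists_nhds_half_neg hV
  have hcover : Set.range u ⊆ ⋃ n, (r n)⁻¹ • u '' W := by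
    rw [← Set.image_univ, ← iUnion_inv_smul_eq_univ_of_tendsto_zero hr hW, Set.image_iUnion]
    exact Set.iUnion_mono fun n => (image_smul_set u (((r n)⁻¹ : Rˣ) : R) W).subset
  obtain ⟨n, hn⟩ := exists_nonempty_interior_closure_of_not_isMeagre h hcover
  rw [closure_smul, interior_smul, Set.smul_set_nonempty] at hn
  have hsub : u '' W - u '' W ⊆ u '' V := by
    rw [← Set.image_sub]
    exact Set.image_mono (Set.sub_subset_iff.2 hWV)
  exact mem_of_superset (closure_sub_self_mem_nhds_zero hn) (closure_mono hsub)

/-- If `R` has a sequence of units converging to `0`, `u : M → N` is linear and its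
image is not meagre in `N`, then for every neighbourhood `V` of `0` in `M` the closure
of `u(V)` is a neighbourhood of `0` in `N`. -/
theorem closure_image_nhds_of_not_meagre
    {R : Type*} [Ring R] [TopologicalSpace R] [IsTopologicalRing R]
    (hR : ∃ r : ℕ → Rˣ, Filter.Tendsto (fun n => (r n : R)) Filter.atTop (nhds 0))
    {M N : Type*}
    [AddCommGroup M] [Module R M] [TopologicalSpace M] [IsTopologicalAddGroup M]
    [ContinuousSMul R M]
    [AddCommGroup N] [Module R N] [TopologicalSpace N] [IsTopologicalAddGroup N]
    [ContinuousSMul R N]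
    (u : M →ₗ[R] N) (h : ¬ IsMeagre (Set.range u)) :
    ∀ V ∈ nhds (0 : M), closure (u '' V) ∈ nhds (0 : N) :=
  closure_image_nhds_of_not_meagre_general hR u h
end

section
/- Let M and N be Hausdorff topological groups each having a countable fundamental system of open neighbourhoods of the identity, with M complete. Let u : M → N be a continuous group homomorphism such that for every neighbourhood V of the identity in M, the closure of u(V) is a neighbourhood of the identity in N. Then u is an open map. -/
/-!
Successive approximation, as in the Banach open mapping theorem. For a neighbourhood `W` of `1`
in `M`, fix a closed neighbourhood `C ⊆ W` of `1` and a basis `V n ⊆ C` of neighbourhoods of `1` with `V (n+1) * V (n+1) ⊆ V n`.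
Given `y ∈ closure (u '' V 1)`, the hypothesis lets us pick `x₀, x₁, …` with `xₙ ∈ V (n+1)` and
`u (x₀ ⋯ xₙ₋₁)⁻¹ * y ∈ closure (u '' V (n+1))`. The partial products telescope into `V n`, so
they form a Cauchy sequence whose limit `x` lies in `C`; their images tend both to `u x` and to
`y`. Hence `u '' W` contains the neighbourhood `closure (u '' V 1)` of `1`, and translating
gives openness.
-/

open Filter Set Topology
open scoped Pointwise

section Group

variable {G : Type*} [Group G]

theorem inv_mul_mem_of_le_of_inv_mul_succ_mem {V : ℕ → Set G} (hV_one : ∀ n, (1 : G) ∈ V n)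
    (hV_mul : ∀ n, V (n + 1) * V (n + 1) ⊆ V n) {p : ℕ → G}
    (hp : ∀ n, (p n)⁻¹ * p (n + 1) ∈ V (n + 1)) {m n : ℕ} (hmn : m ≤ n) :
    (p m)⁻¹ * p n ∈ V m := by
  obtain ⟨k, rfl⟩ := Nat.exists_eq_add_of_le hmn
  induction k generalizing m with
  | zero => simpa using hV_one m
  | succ k ih =>
    have split : (p m)⁻¹ * p (m + (k + 1)) =
        ((p m)⁻¹ * p (m + 1)) * ((p (m + 1))⁻¹ * p (m + 1 + k)) := by
      rw [show m + (k + 1) = m + 1 + k by omega]; group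
    rw [split]
    exact hV_mul m (mul_mem_mul (hp m) (ih (Nat.le_add_right _ _)))

end Group

section TopologicalGroup

variable {G : Type*} [Group G] [TopologicalSpace G] [IsTopologicalGroup G]

theorem IsTopologicalGroup.exists_antitone_basis_nhds_one_subset [FirstCountableTopology G]
    {C : Set G} (hC : C ∈ 𝓝 1) :
    ∃ V : ℕ → Set G, (𝓝 1).HasAntitoneBasis V ∧ (∀ n, V (n + 1) * V (n + 1) ⊆ V n) ∧ V 0 ⊆ C := by
  obtain ⟨V, hV, hV_mul⟩ := exists_antitone_basis_nhds_one G
  obtain ⟨k, hk⟩ := hV.mem_iff.1 hC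
  refine ⟨fun n => V (n + k), hV.comp_mono (monotone_id.add_const k)
    (tendsto_add_atTop_nat k), fun n => ?_, by simpa using hk⟩
  simpa only [Nat.add_right_comm n 1 k] using hV_mul (n + k)

theorem exists_inv_mul_mem_of_mem_closure {s t : Set G} {z : G} (hz : z ∈ closure s)
    (ht : t ∈ 𝓝 1) : ∃ a ∈ s, a⁻¹ * z ∈ t := by
  have ht' : (fun w => w⁻¹ * z) ⁻¹' t ∈ 𝓝 z :=
    ContinuousAt.preimage_mem_nhds (by fun_prop) (by simpa using ht)
  obtain ⟨a, hat, has⟩ := mem_closure_iff_nhds.1 hz _ ht'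
  exact ⟨a, has, hat⟩

theorem MonoidHom.exists_seq_of_mem_closure_image {M : Type*} [Group M] (u : M →* G)
    {W : ℕ → Set M} (hW : ∀ n, closure (u '' W n) ∈ 𝓝 1) {y : G}
    (hy : y ∈ closure (u '' W 0)) :
    ∃ p : ℕ → M, p 0 = 1 ∧ (∀ n, (p n)⁻¹ * p (n + 1) ∈ W n) ∧
      ∀ n, (u (p n))⁻¹ * y ∈ closure (u '' W n) := by
  have step : ∀ n q, (u q)⁻¹ * y ∈ closure (u '' W n) →
      ∃ x ∈ W n, (u (q * x))⁻¹ * y ∈ closure (u '' W (n + 1)) := by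
    intro n q hq
    obtain ⟨_, ⟨x, hx, rfl⟩, hxy⟩ := exists_inv_mul_mem_of_mem_closure hq (hW (n + 1))
    exact ⟨x, hx, by simpa [mul_assoc] using hxy⟩
  choose! next next_mem next_spec using step
  let p : ℕ → M := fun n => Nat.rec 1 (fun m q => q * next m q) n
  have hp : ∀ n, (u (p n))⁻¹ * y ∈ closure (u '' W n) := by
    intro n
    induction n with
    | zero => simpa [p] using hy
    | succ n ih => exact next_spec n (p n) ih
  refine ⟨p, rfl, fun n => ?_, hp⟩
  simpa [p] using next_mem n (p n) (hp n)

end TopologicalGroup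

theorem cauchySeq_of_inv_mul_mem {G : Type*} [Group G] [UniformSpace G] [IsUniformGroup G]
    {V : ℕ → Set G} (hV : (𝓝 1).HasBasis (fun _ => True) V) {p : ℕ → G}
    (hp : ∀ m n, m ≤ n → (p m)⁻¹ * p n ∈ V m) : CauchySeq p := by
  have hU := uniformity_eq_comap_inv_mul_nhds_one_swapped G ▸ hV.comap (fun q : G × G => q.2⁻¹ * q.1)
  rw [hU.cauchySeq_iff']
  exact fun m _ => ⟨m, fun n hn => hp m n hn⟩

theorem Filter.HasAntitoneBasis.tendsto_of_mem_closure_image {X Y : Type*} [TopologicalSpace X]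
    [TopologicalSpace Y] [RegularSpace Y] {f : X → Y} {x : X} (hf : ContinuousAt f x)
    {V : ℕ → Set X} (hV : (𝓝 x).HasAntitoneBasis V) {z : ℕ → Y}
    (hz : ∀ n, z n ∈ closure (f '' V n)) : Tendsto z atTop (𝓝 (f x)) := by
  refine (closed_nhds_basis (f x)).tendsto_right_iff.2 fun T ⟨hT, hT_closed⟩ => ?_
  obtain ⟨k, hk⟩ := hV.mem_iff.1 (hf hT)
  filter_upwards [eventually_ge_atTop k] with n hn
  exact closure_minimal ((image_mono (hV.antitone hn)).trans (image_subset_iff.2 hk)) hT_closed (hz n)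

theorem MonoidHom.image_mem_nhds_one_of_closure_image_mem_nhds_one {M N : Type*}
    [Group M] [UniformSpace M] [IsUniformGroup M] [FirstCountableTopology M] [CompleteSpace M]
    [Group N] [TopologicalSpace N] [IsTopologicalGroup N] [T2Space N]
    (u : M →* N) (hu : Continuous u) (h : ∀ V ∈ 𝓝 (1 : M), closure (u '' V) ∈ 𝓝 (1 : N))
    {W : Set M} (hW : W ∈ 𝓝 1) : u '' W ∈ 𝓝 1 := by
  obtain ⟨C, hC, hC_closed, hCW⟩ := exists_mem_nhds_isClosed_subset hW
  obtain ⟨V, hV, hV_mul, hVC⟩ := IsTopologicalGroup.exists_antitone_basis_nhds_one_subset hC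
  refine mem_of_superset (h _ (hV.mem 1)) fun y hy => ?_
  obtain ⟨p, hp0, hp_step, hp_approx⟩ :=
    u.exists_seq_of_mem_closure_image (W := fun n => V (n + 1)) (fun n => h _ (hV.mem _)) hy
  have hp : ∀ m n, m ≤ n → (p m)⁻¹ * p n ∈ V m := fun m n =>
    inv_mul_mem_of_le_of_inv_mul_succ_mem (fun n => mem_of_mem_nhds (hV.mem n)) hV_mul hp_step
  obtain ⟨x, hx⟩ := cauchySeq_tendsto_of_complete (cauchySeq_of_inv_mul_mem hV.toHasBasis hp)
  have hxC : x ∈ C := hC_closed.mem_of_tendsto hx <|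
    Eventually.of_forall fun n => hVC (by simpa [hp0] using hp 0 n n.zero_le)
  have h_err : Tendsto (fun n => (u (p n))⁻¹ * y) atTop (𝓝 1) := by
    simpa using hV.tendsto_of_mem_closure_image hu.continuousAt fun n =>
      closure_mono (image_mono (hV.antitone n.le_succ)) (hp_approx n)
  have h_lim : Tendsto (fun n => u (p n)) atTop (𝓝 y) := by
    simpa using (tendsto_const_nhds (x := y)).mul h_err.inv
  exact ⟨x, hCW hxC, tendsto_nhds_unique ((hu.tendsto x).comp hx) h_lim⟩

theorem isOpenMap_of_closure_image_nhds_general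
    {M N : Type*}
    [Group M] [UniformSpace M] [IsUniformGroup M]
    [FirstCountableTopology M] [CompleteSpace M]
    [Group N] [TopologicalSpace N] [IsTopologicalGroup N] [T2Space N]
    (u : M →* N) (hu : Continuous u)
    (h : ∀ V ∈ nhds (1 : M), closure (u '' V) ∈ nhds (1 : N)) :
    IsOpenMap u :=
  IsTopologicalGroup.isOpenMap_iff_nhds_one.2 fun W hW =>
    mem_of_superset (u.image_mem_nhds_one_of_closure_image_mem_nhds_one hu h hW)
      (image_preimage_subset u W)

/-- If `M` is a complete metrisable topological group, `N` a Hausdorff first-countable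
topological group, and `u : M → N` a continuous homomorphism such that the closure of the
image of each neighbourhood of the identity is a neighbourhood of the identity, then `u`
is open. -/
theorem isOpenMap_of_closure_image_nhds
    {M N : Type*}
    [Group M] [UniformSpace M] [IsUniformGroup M] [T2Space M]
    [FirstCountableTopology M] [CompleteSpace M]
    [Group N] [TopologicalSpace N] [IsTopologicalGroup N] [T2Space N]
    [FirstCountableTopology N]
    (u : M →* N) (hu : Continuous u)
    (h : ∀ V ∈ nhds (1 : M), closure (u '' V) ∈ nhds (1 : N)) :
    IsOpenMap u :=
  isOpenMap_of_closure_image_nhds_general u hu h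
end

section
/- Let R be a topological ring such that every neighbourhood of 0 in R contains a unit. Let M and N be Hausdorff topological R-modules such that M is complete and has a countable fundamental system of open neighbourhoods of 0. If u : M → N is a linear, continuous, and open map, then u is surjective and N is complete and has a countable fundamental system of open neighbourhoods of 0. -/
/-!
The range of `u` is an open submodule of `N`. For `n : N`, continuity of `r ↦ r • n` at `0`
gives a unit `r` with `r • n` in the range, hence `n` is in the range: `u` is surjective.
A surjective continuous open homomorphism identifies `N` with `M ⧸ ker u` as a topological group.
Quotients of first countable complete groups are first countable and complete (Bourbaki), and
for commutative topological groups the uniform structure is determined by the topology, so both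
properties pass to `N`.
-/

open Topology

theorem Submodule.eq_top_of_isOpen {R N : Type*} [Ring R] [TopologicalSpace R]
    [AddCommGroup N] [Module R N] [TopologicalSpace N] [ContinuousSMul R N]
    (hR : ∀ U ∈ 𝓝 (0 : R), ∃ r : Rˣ, (r : R) ∈ U) {S : Submodule R N}
    (hS : IsOpen (S : Set N)) : S = ⊤ := by
  refine Submodule.eq_top_iff'.2 fun n => ?_
  have hmem : (· • n) ⁻¹' (S : Set N) ∈ 𝓝 (0 : R) :=
    (continuous_id.smul continuous_const : Continuous (· • n)).continuousAt.preimage_mem_nhds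
      (by simpa only [zero_smul] using hS.mem_nhds S.zero_mem)
  obtain ⟨r, hr⟩ := hR _ hmem
  exact (S.smul_mem_iff_of_isUnit r.isUnit).1 hr

theorem LinearMap.surjective_of_isOpenMap {R M N : Type*} [Ring R] [TopologicalSpace R]
    [AddCommGroup M] [Module R M] [TopologicalSpace M]
    [AddCommGroup N] [Module R N] [TopologicalSpace N] [ContinuousSMul R N]
    (hR : ∀ U ∈ 𝓝 (0 : R), ∃ r : Rˣ, (r : R) ∈ U) (u : M →ₗ[R] N) (hopen : IsOpenMap u) :
    Function.Surjective u := by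
  refine LinearMap.range_eq_top.1 (Submodule.eq_top_of_isOpen hR ?_)
  simpa only [LinearMap.coe_range] using hopen.isOpen_range

def ContinuousAddEquiv.toUniformEquiv {G H : Type*} [AddGroup G] [UniformSpace G]
    [IsUniformAddGroup G] [AddGroup H] [UniformSpace H] [IsUniformAddGroup H] (e : G ≃ₜ+ H) :
    G ≃ᵤ H where
  toEquiv := e.toEquiv
  uniformContinuous_toFun :=
    uniformContinuous_addMonoidHom_of_continuous (f := e.toAddEquiv.toAddMonoidHom) e.continuous
  uniformContinuous_invFun :=
    uniformContinuous_addMonoidHom_of_continuous (f := e.symm.toAddEquiv.toAddMonoidHom)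
      e.symm.continuous

namespace AddMonoidHom

noncomputable def quotientKerContinuousEquivOfIsOpenMap {G H : Type*} [AddGroup G]
    [TopologicalSpace G] [AddGroup H] [TopologicalSpace H] (f : G →+ H) (hf : Continuous f)
    (hopen : IsOpenMap f) (hsurj : Function.Surjective f) : G ⧸ f.ker ≃ₜ+ H :=
  let e := QuotientAddGroup.quotientKerEquivOfSurjective f hsurj
  .mk' (e.toEquiv.toHomeomorphOfContinuousOpen (continuous_quot_lift _ hf)
    (.of_comp continuous_quot_mk QuotientAddGroup.mk_surjective hopen)) e.map_add

theorem completeSpace_of_isOpenMap {G H : Type*} [AddCommGroup G] [UniformSpace G]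
    [IsUniformAddGroup G] [FirstCountableTopology G] [CompleteSpace G]
    [AddCommGroup H] [UniformSpace H] [IsUniformAddGroup H]
    (f : G →+ H) (hf : Continuous f) (hopen : IsOpenMap f) (hsurj : Function.Surjective f) :
    CompleteSpace H := by
  let := IsTopologicalAddGroup.rightUniformSpace (G ⧸ f.ker)
  have := isUniformAddGroup_of_addCommGroup (G := G ⧸ f.ker)
  have := QuotientAddGroup.completeSpace_right G f.ker
  exact (f.quotientKerContinuousEquivOfIsOpenMap hf hopen hsurj).toUniformEquiv.completeSpace_iff.1
    inferInstance

end AddMonoidHom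

theorem surjective_complete_of_open_general
    {R : Type*} [Ring R] [TopologicalSpace R]
    (hR : ∀ U ∈ nhds (0 : R), ∃ r : Rˣ, (r : R) ∈ U)
    {M N : Type*}
    [AddCommGroup M] [Module R M] [UniformSpace M] [IsUniformAddGroup M]
    [FirstCountableTopology M]
    [CompleteSpace M]
    [AddCommGroup N] [Module R N] [UniformSpace N] [IsUniformAddGroup N]
    [ContinuousSMul R N]
    (u : M →ₗ[R] N) (hu : Continuous u) (hopen : IsOpenMap u) :
    Function.Surjective u ∧ CompleteSpace N ∧
      FirstCountableTopology N := by
  have hsurj := u.surjective_of_isOpenMap hR hopen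
  refine ⟨hsurj, u.toAddMonoidHom.completeSpace_of_isOpenMap hu hopen hsurj, ?_⟩
  exact (u.toAddMonoidHom.quotientKerContinuousEquivOfIsOpenMap hu hopen hsurj).symm.toHomeomorph
    |>.isInducing.firstCountableTopology

/-- If `R` has a unit in every neighbourhood of `0`, `M` is a complete Hausdorff
first-countable topological `R`-module, `N` a Hausdorff topological `R`-module and
`u : M → N` is linear, continuous and open, then `u` is surjective and `N` is complete
with a countable fundamental system of neighbourhoods of `0`. -/
theorem surjective_complete_of_open
    {R : Type*} [Ring R] [TopologicalSpace R] [IsTopologicalRing R]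
    (hR : ∀ U ∈ nhds (0 : R), ∃ r : Rˣ, (r : R) ∈ U)
    {M N : Type*}
    [AddCommGroup M] [Module R M] [UniformSpace M] [IsUniformAddGroup M]
    [ContinuousSMul R M] [T2Space M] [FirstCountableTopology M]
    [CompleteSpace M]
    [AddCommGroup N] [Module R N] [UniformSpace N] [IsUniformAddGroup N]
    [ContinuousSMul R N] [T2Space N]
    (u : M →ₗ[R] N) (hu : Continuous u) (hopen : IsOpenMap u) :
    Function.Surjective u ∧ CompleteSpace N ∧
      FirstCountableTopology N :=
  surjective_complete_of_open_general hR u hu hopen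
end

section
/- Let M and N be metric spaces with M complete, and let u : M → N be a continuous map. Suppose there is a function ρ : ℝ_{>0} → ℝ_{>0} such that for every r > 0 and every x ∈ M, the closed ball of radius ρ(r) around u(x) is contained in the closure of u(B_r(x)), where B_r(x) is the closed ball of radius r around x. Then for every r > 0, every a > r, and every x ∈ M, the closed ball of radius ρ(r) around u(x) is contained in u(B_a(x)). -/
/-!
Successive approximation, as in the proof of the open mapping theorem. Starting from `x`,
the closure hypothesis at radius `sₙ` moves the current point by at most `sₙ` to one whose image
is within a prescribed tolerance `εₙ₊₁` of `y`. With `Σ sₙ < ∞` the points form a Cauchy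
sequence, its limit is at distance at most `Σ sₙ` from `x`, and since `εₙ → 0` its image is `y`.
Taking `sₙ = r qⁿ` with `q = 1 - r / a` makes `Σ sₙ = a`.
-/

open Metric Filter Topology

section

variable {M N : Type*} [MetricSpace M] [MetricSpace N] {u : M → N}

theorem exists_seq_of_closedBall_subset_closure {s ε : ℕ → ℝ} (hε : ∀ n, 0 < ε n)
    (h : ∀ n z, closedBall (u z) (ε n) ⊆ closure (u '' closedBall z (s n)))
    {x : M} {y : N} (hy : dist (u x) y ≤ ε 0) :
    ∃ z : ℕ → M, z 0 = x ∧ (∀ n, dist (z n) (z (n + 1)) ≤ s n) ∧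
      ∀ n, dist (u (z n)) y ≤ ε n := by
  have step : ∀ n z, ∃ z', dist (u z) y ≤ ε n →
      dist z z' ≤ s n ∧ dist (u z') y ≤ ε (n + 1) := by
    intro n z
    by_cases hz : dist (u z) y ≤ ε n
    · have hy : y ∈ closure (u '' closedBall z (s n)) :=
        h n z (mem_closedBall_comm.mp hz)
      obtain ⟨_, ⟨z', hz', rfl⟩, hdist⟩ := mem_closure_iff.mp hy _ (hε (n + 1))
      exact ⟨z', fun _ => ⟨mem_closedBall_comm.mp hz', (dist_comm _ _).trans_le hdist.le⟩⟩
    · exact ⟨z, fun hz' => absurd hz' hz⟩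
  choose next hnext using step
  let z : ℕ → M := fun n => Nat.rec x next n
  have hz : ∀ n, dist (u (z n)) y ≤ ε n := by
    intro n
    induction n with
    | zero => exact hy
    | succ n ih => exact (hnext n (z n) ih).2
  exact ⟨z, rfl, fun n => (hnext n (z n) (hz n)).1, hz⟩

theorem exists_dist_le_tsum_map_eq [CompleteSpace M] (hu : Continuous u) {s ε : ℕ → ℝ}
    (hs : Summable s) (hε : Tendsto ε atTop (𝓝 0)) {z : ℕ → M} {y : N}
    (hstep : ∀ n, dist (z n) (z (n + 1)) ≤ s n) (hzy : ∀ n, dist (u (z n)) y ≤ ε n) :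
    ∃ x', dist (z 0) x' ≤ ∑' n, s n ∧ u x' = y := by
  obtain ⟨x', hx'⟩ := cauchySeq_tendsto_of_complete (cauchySeq_of_dist_le_of_summable s hstep hs)
  have huy : Tendsto (fun n => u (z n)) atTop (𝓝 y) :=
    tendsto_iff_dist_tendsto_zero.mpr
      (squeeze_zero (fun _ => dist_nonneg) hzy hε)
  exact ⟨x', dist_le_tsum_of_dist_le_of_tendsto₀ s hstep hs hx',
    tendsto_nhds_unique ((hu.tendsto x').comp hx') huy⟩

theorem closedBall_subset_image_tsum_of_closure [CompleteSpace M] (hu : Continuous u)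
    {s ε : ℕ → ℝ} (hs : Summable s) (hε : ∀ n, 0 < ε n) (hε_lim : Tendsto ε atTop (𝓝 0))
    (h : ∀ n z, closedBall (u z) (ε n) ⊆ closure (u '' closedBall z (s n))) (x : M) :
    closedBall (u x) (ε 0) ⊆ u '' closedBall x (∑' n, s n) := by
  intro y hy
  obtain ⟨z, rfl, hstep, hzy⟩ :=
    exists_seq_of_closedBall_subset_closure hε h (mem_closedBall_comm.mp hy)
  obtain ⟨x', hx', rfl⟩ := exists_dist_le_tsum_map_eq hu hs hε_lim hstep hzy
  exact ⟨x', mem_closedBall_comm.mp hx', rfl⟩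

end

/-- If `M` is complete and a continuous map `u : M → N` of metric spaces satisfies
`B_{ρ(r)}(u x) ⊆ closure (u '' B_r(x))` for all `x` and `r > 0`, then
`B_{ρ(r)}(u x) ⊆ u '' B_a(x)` for all `a > r`. -/
theorem closedBall_subset_image_of_closure
    {M N : Type*} [MetricSpace M] [MetricSpace N] [CompleteSpace M]
    (u : M → N) (hu : Continuous u) (ρ : ℝ → ℝ) (hρ : ∀ r > 0, ρ r > 0)
    (h : ∀ r > 0, ∀ x : M,
      Metric.closedBall (u x) (ρ r) ⊆ closure (u '' Metric.closedBall x r)) :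
    ∀ r > 0, ∀ a > r, ∀ x : M,
      Metric.closedBall (u x) (ρ r) ⊆ u '' Metric.closedBall x a := by
  intro r hr a ha x
  set q := 1 - r / a
  have hra : 0 < r / a := div_pos hr (hr.trans ha)
  have hq₀ : 0 < q := sub_pos.mpr ((div_lt_one (hr.trans ha)).mpr ha)
  have hq₁ : q < 1 := sub_lt_self 1 hra
  set s : ℕ → ℝ := fun n => r * q ^ n
  -- the tolerances are capped by `q ^ n * ρ r` so that they tend to `0` while `ε 0 = ρ r`
  set ε : ℕ → ℝ := fun n => min (ρ (s n)) (q ^ n * ρ r)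
  have hs_pos : ∀ n, 0 < s n := fun n => mul_pos hr (pow_pos hq₀ n)
  have hs_sum : ∑' n, s n = a := by
    rw [tsum_mul_left, tsum_geometric_of_lt_one hq₀.le hq₁, sub_sub_cancel, inv_div,
      mul_div_cancel₀ _ hr.ne']
  have hε_pos : ∀ n, 0 < ε n := fun n =>
    lt_min (hρ _ (hs_pos n)) (mul_pos (pow_pos hq₀ n) (hρ r hr))
  have hε_lim : Tendsto ε atTop (𝓝 0) := by
    refine squeeze_zero (fun n => (hε_pos n).le) (fun n => min_le_right _ _) ?_
    simpa using (tendsto_pow_atTop_nhds_zero_of_lt_one hq₀.le hq₁).mul_const (ρ r)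
  have hε₀ : ε 0 = ρ r := by simp [ε, s]
  simpa only [hε₀, hs_sum] using closedBall_subset_image_tsum_of_closure (s := s) hu
    ((summable_geometric_of_lt_one hq₀.le hq₁).mul_left r) hε_pos hε_lim
    (fun n z => (closedBall_subset_closedBall (min_le_left _ _)).trans (h _ (hs_pos n) z)) x
end

section
/- Let R be a topological ring admitting a sequence of units converging to 0. Let M and N be Hausdorff topological R-modules, each having a countable fundamental system of open neighbourhoods of 0, with both M and N complete. Then every continuous R-linear bijection u : M → N is an isomorphism of topological R-modules, i.e. its inverse is also continuous. -/
/-!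
Since `r n → 0` through units, the sets `(r n)⁻¹ • closure (u '' V)` cover `N` for every
neighbourhood `V` of `0`, so by Baire's theorem `closure (u '' V)` has interior points, and
`V - V ⊆ s` turns this into `closure (u '' s) ∈ 𝓝 0`. Completeness of `M` removes the closure:
approximating `y ∈ closure (u '' V 1)` successively along a basis with `V (n+1) + V (n+1) ⊆ V n`
yields a Cauchy sequence of partial sums whose limit lies in `s` and maps to `y`. Hence `u` is
open at `0`, i.e. `u.symm` is continuous at `0`.
-/

open Filter Set Topology Uniformity Pointwise

section Baire

variable {R M N : Type*} [Ring R] [TopologicalSpace R]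
  [AddCommGroup M] [Module R M] [TopologicalSpace M] [ContinuousSMul R M]
  [AddCommGroup N] [Module R N] [TopologicalSpace N]

theorem iUnion_units_inv_smul_closure_image_eq_univ {r : ℕ → Rˣ}
    (hr : Tendsto (fun n => (r n : R)) atTop (𝓝 0)) {f : M →ₗ[R] N}
    (hf : Function.Surjective f) {V : Set M} (hV : V ∈ 𝓝 0) :
    ⋃ n, (r n)⁻¹ • closure (f '' V) = univ := by
  refine eq_univ_of_forall fun y => ?_
  obtain ⟨m, rfl⟩ := hf y
  have hrm : Tendsto (fun n => (r n : R) • m) atTop (𝓝 0) := by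
    simpa using hr.smul_const m
  obtain ⟨n, hn⟩ := (hrm.eventually_mem hV).exists
  refine mem_iUnion.2 ⟨n, mem_smul_set_iff_inv_smul_mem.2 ?_⟩
  rw [inv_inv, Units.smul_def, ← map_smul]
  exact subset_closure (mem_image_of_mem f hn)

variable [ContinuousConstSMul R N] [BaireSpace N]

theorem nonempty_interior_closure_image {r : ℕ → Rˣ}
    (hr : Tendsto (fun n => (r n : R)) atTop (𝓝 0)) {f : M →ₗ[R] N}
    (hf : Function.Surjective f) {V : Set M} (hV : V ∈ 𝓝 0) :
    (interior (closure (f '' V))).Nonempty := by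
  obtain ⟨n, hn⟩ := nonempty_interior_of_iUnion_of_closed
    (fun n => isClosed_closure.smul _) (iUnion_units_inv_smul_closure_image_eq_univ hr hf hV)
  rw [interior_smul] at hn
  exact smul_set_nonempty.1 hn

variable [IsTopologicalAddGroup M] [IsTopologicalAddGroup N]

theorem closure_image_mem_nhds_zero {r : ℕ → Rˣ}
    (hr : Tendsto (fun n => (r n : R)) atTop (𝓝 0)) {f : M →ₗ[R] N}
    (hf : Function.Surjective f) {s : Set M} (hs : s ∈ 𝓝 0) :
    closure (f '' s) ∈ 𝓝 0 := by
  obtain ⟨V, hV, hVs⟩ := exists_nhds_half_neg hs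
  obtain ⟨y, hy⟩ := nonempty_interior_closure_image hr hf hV
  have hshift : ∀ᶠ z in 𝓝 (0 : N), z + y ∈ closure (f '' V) :=
    (continuous_add_const y).continuousAt.preimage_mem_nhds
      (by simpa using mem_interior_iff_mem_nhds.1 hy)
  filter_upwards [hshift] with z hz
  simpa using map_mem_closure₂ continuous_sub hz (interior_subset hy) <| by
    rintro _ ⟨v, hv, rfl⟩ _ ⟨w, hw, rfl⟩
    exact ⟨v - w, hVs v hv w hw, map_sub f v w⟩

end Baire

section AlmostOpen

variable {G H : Type*} [AddCommGroup G] [AddCommGroup H]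

theorem sub_mem_of_succ_sub_mem {V : ℕ → Set G} (hV : ∀ n, V (n + 1) + V (n + 1) ⊆ V n)
    (hV0 : ∀ n, (0 : G) ∈ V n) {S : ℕ → G} (hS : ∀ n, S (n + 1) - S n ∈ V (n + 1)) :
    ∀ n k, S (n + k) - S n ∈ V n := by
  intro n k
  induction k generalizing n with
  | zero => simpa using hV0 n
  | succ k ih =>
    have hsplit : S (n + (k + 1)) - S n = (S (n + 1 + k) - S (n + 1)) + (S (n + 1) - S n) := by
      rw [add_right_comm n 1 k, ← add_assoc]; abel
    exact hsplit ▸ hV n (add_mem_add (ih (n + 1)) (hS n))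

theorem exists_antitone_basis_nhds_zero_subset [TopologicalSpace G] [IsTopologicalAddGroup G]
    [FirstCountableTopology G] {s : Set G} (hs : s ∈ 𝓝 0) :
    ∃ V : ℕ → Set G, (𝓝 0).HasAntitoneBasis V ∧ (∀ n, V (n + 1) + V (n + 1) ⊆ V n) ∧ V 0 ⊆ s := by
  obtain ⟨U, hU, hU2⟩ := IsTopologicalAddGroup.exists_antitone_basis_nhds_zero G
  obtain ⟨k, -, hk⟩ := hU.1.mem_iff.1 hs
  exact ⟨fun n => U (k + n), hU.comp_strictMono (strictMono_id.const_add k),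
    fun n => hU2 (k + n), hk⟩

theorem cauchySeq_of_sub_mem_antitone_basis [UniformSpace G] [IsUniformAddGroup G]
    {V : ℕ → Set G} (hV : (𝓝 0).HasAntitoneBasis V) {S : ℕ → G}
    (hS : ∀ n k, S (n + k) - S n ∈ V n) : CauchySeq S := by
  have hbasis : (𝓤 G).HasBasis (fun _ => True) fun n => (fun p : G × G => p.1 - p.2) ⁻¹' V n := by
    rw [uniformity_eq_comap_nhds_zero_swapped]
    exact hV.1.comap _
  refine hbasis.cauchySeq_iff'.2 fun n _ => ⟨n, fun m hm => ?_⟩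
  obtain ⟨k, rfl⟩ := Nat.exists_eq_add_of_le hm
  exact hS n k

theorem tendsto_zero_of_mem_closure_image [TopologicalSpace G] [TopologicalSpace H]
    [IsTopologicalAddGroup H] {f : G →+ H} (hf : Continuous f) {V : ℕ → Set G}
    (hV : (𝓝 0).HasAntitoneBasis V) {z : ℕ → H} (hz : ∀ n, z n ∈ closure (f '' V n)) :
    Tendsto z atTop (𝓝 0) := by
  refine (closed_nhds_basis (0 : H)).tendsto_right_iff.2 fun W ⟨hW, hWc⟩ => ?_
  have hpre : f ⁻¹' W ∈ 𝓝 0 := hf.tendsto' 0 0 (map_zero f) hW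
  filter_upwards [hV.eventually_subset hpre] with n hn
  exact closure_minimal (image_subset_iff.2 hn) hWc (hz n)

theorem exists_seq_sub_mem_closure_image [TopologicalSpace G] [TopologicalSpace H]
    [IsTopologicalAddGroup H] {f : G →+ H}
    (hf : ∀ s ∈ 𝓝 (0 : G), closure (f '' s) ∈ 𝓝 0) {W : ℕ → Set G} (hW : ∀ n, W n ∈ 𝓝 0)
    {y : H} (hy : y ∈ closure (f '' W 0)) :
    ∃ S : ℕ → G, S 0 = 0 ∧ ∀ n, S (n + 1) - S n ∈ W n ∧ y - f (S n) ∈ closure (f '' W n) := by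
  have hstep : ∀ n, ∀ z ∈ closure (f '' W n), ∃ x ∈ W n, z - f x ∈ closure (f '' W (n + 1)) := by
    intro n z hz
    obtain ⟨_, ⟨x, hx, rfl⟩, hzx⟩ :=
      mem_closure_iff_nhds_zero.1 hz _ (neg_mem_nhds_zero H (hf _ (hW (n + 1))))
    exact ⟨x, hx, by simpa using hzx⟩
  choose! g hgW hgcl using hstep
  let S : ℕ → G := fun n => Nat.rec 0 (fun k Sk => Sk + g k (y - f Sk)) n
  have hSy : ∀ n, y - f (S n) ∈ closure (f '' W n) := by
    intro n
    induction n with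
    | zero => simpa [S] using hy
    | succ n ih =>
      have := hgcl n _ ih
      rwa [sub_sub, ← map_add] at this
  exact ⟨S, rfl, fun n => ⟨by simpa [S] using hgW n _ (hSy n), hSy n⟩⟩

theorem image_mem_nhds_zero_of_closure_image_mem_nhds_zero [UniformSpace G]
    [IsUniformAddGroup G] [FirstCountableTopology G] [CompleteSpace G] [TopologicalSpace H]
    [IsTopologicalAddGroup H] [T2Space H]
    {f : G →+ H} (hfc : Continuous f) (hf : ∀ s ∈ 𝓝 (0 : G), closure (f '' s) ∈ 𝓝 0)
    {s : Set G} (hs : s ∈ 𝓝 0) : f '' s ∈ 𝓝 0 := by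
  obtain ⟨t, ht, htc, hts⟩ := exists_mem_nhds_isClosed_subset hs
  obtain ⟨V, hV, hV2, hVt⟩ := exists_antitone_basis_nhds_zero_subset ht
  have hVnhds : ∀ n, V n ∈ 𝓝 0 := fun n => hV.1.mem_of_mem trivial
  refine mem_of_superset (hf _ (hVnhds 1)) fun y hy => ?_
  obtain ⟨S, hS0, hSV⟩ :=
    exists_seq_sub_mem_closure_image hf (W := fun n => V (n + 1)) (fun n => hVnhds _) hy
  have hS : ∀ n k, S (n + k) - S n ∈ V n :=
    sub_mem_of_succ_sub_mem hV2 (fun n => mem_of_mem_nhds (hVnhds n)) fun n => (hSV n).1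
  obtain ⟨x, hx⟩ := cauchySeq_tendsto_of_complete (cauchySeq_of_sub_mem_antitone_basis hV hS)
  have hxt : x ∈ t :=
    htc.mem_of_tendsto hx <| .of_forall fun n => hVt (by simpa [hS0] using hS 0 n)
  have hyS : Tendsto (fun n => y - f (S n)) atTop (𝓝 0) :=
    tendsto_zero_of_mem_closure_image hfc (hV.comp_strictMono (strictMono_id.add_const 1))
      fun n => (hSV n).2
  have hfS : Tendsto (fun n => f (S n)) atTop (𝓝 y) := by
    simpa using (tendsto_const_nhds (x := y)).sub hyS
  exact ⟨x, hts hxt, tendsto_nhds_unique ((hfc.tendsto x).comp hx) hfS⟩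

end AlmostOpen

theorem continuous_symm_of_continuous_bijective_general
    {R : Type*} [Ring R] [TopologicalSpace R]
    (hR : ∃ r : ℕ → Rˣ, Filter.Tendsto (fun n => (r n : R)) Filter.atTop (nhds 0))
    {M N : Type*}
    [AddCommGroup M] [Module R M] [UniformSpace M] [IsUniformAddGroup M]
    [ContinuousSMul R M] [FirstCountableTopology M]
    [CompleteSpace M]
    [AddCommGroup N] [Module R N] [UniformSpace N] [IsUniformAddGroup N]
    [ContinuousSMul R N] [T2Space N] [FirstCountableTopology N]
    [CompleteSpace N]
    (u : M ≃ₗ[R] N) (hu : Continuous u) :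
    Continuous u.symm := by
  obtain ⟨r, hr⟩ := hR
  have : (𝓤 N).IsCountablyGenerated := IsUniformAddGroup.uniformity_countably_generated
  have hopen : ∀ s ∈ 𝓝 (0 : M), u '' s ∈ 𝓝 0 := fun s =>
    image_mem_nhds_zero_of_closure_image_mem_nhds_zero (f := u.toAddMonoidHom) hu
      fun s => closure_image_mem_nhds_zero hr (f := u.toLinearMap) u.surjective
  refine continuous_of_continuousAt_zero u.symm fun s hs => ?_
  rw [map_zero] at hs
  simpa [u.image_eq_preimage_symm] using hopen s hs

/-- Over a topological ring with a sequence of units converging to `0`, a continuous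
linear bijection between complete, Hausdorff, first-countable topological modules is an
isomorphism of topological modules, i.e. its inverse is continuous. -/
theorem continuous_symm_of_continuous_bijective
    {R : Type*} [Ring R] [TopologicalSpace R] [IsTopologicalRing R]
    (hR : ∃ r : ℕ → Rˣ, Filter.Tendsto (fun n => (r n : R)) Filter.atTop (nhds 0))
    {M N : Type*}
    [AddCommGroup M] [Module R M] [UniformSpace M] [IsUniformAddGroup M]
    [ContinuousSMul R M] [T2Space M] [FirstCountableTopology M]
    [CompleteSpace M]
    [AddCommGroup N] [Module R N] [UniformSpace N] [IsUniformAddGroup N]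
    [ContinuousSMul R N] [T2Space N] [FirstCountableTopology N]
    [CompleteSpace N]
    (u : M ≃ₗ[R] N) (hu : Continuous u) :
    Continuous u.symm :=
  continuous_symm_of_continuous_bijective_general hR u hu
end

section
/- Let R be a complete Hausdorff topological ring admitting a sequence of units converging to 0 and having a countable fundamental system of open neighbourhoods of 0. Let M and N be topological R-modules such that M is Hausdorff, complete, finitely generated as an R-module, and has a countable fundamental system of open neighbourhoods of 0. Then every R-linear map f : M → N is continuous. -/
/-!
Write `M` as the image of a surjective `R`-linear map `φ : Rᵏ → M`; then `f ∘ φ` is continuous,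
so it suffices that `φ` is open at `0` (open mapping theorem). `M` is a Baire space, and for a
neighbourhood `V` of `0` the translates `(r n)⁻¹ • closure (φ V)` cover `M` because `r n → 0`;
hence `closure (φ V)` has interior and `closure (φ U)` is a neighbourhood of `0`. Completeness of
`Rᵏ` then removes the closure: a point of `closure (φ U)` is approximated by `φ` of partial sums
of a series whose terms lie in a rapidly shrinking sequence of neighbourhoods.
-/

open Filter Set Topology Pointwise Uniformity

theorem interior_closure_nonempty_of_forall_exists_smul_mem {G X : Type*} [Group G]
    [MulAction G X] [TopologicalSpace X] [ContinuousConstSMul G X] [BaireSpace X] [Nonempty X]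
    (g : ℕ → G) {S : Set X} (hS : ∀ x, ∃ n, g n • x ∈ S) :
    (interior (closure S)).Nonempty := by
  obtain ⟨n, hn⟩ := nonempty_interior_of_iUnion_of_closed
    (fun n => isClosed_closure.preimage (continuous_const_smul (g n)))
    (iUnion_eq_univ_iff.2 fun x => (hS x).imp fun _ hn => subset_closure hn)
  change (interior (Homeomorph.smul (g n) ⁻¹' closure S)).Nonempty at hn
  rw [← Homeomorph.preimage_interior] at hn
  exact (hn.image _).mono (image_preimage_subset _ _)

theorem sub_self_mem_nhds_zero_of_interior_nonempty {G : Type*} [AddGroup G] [TopologicalSpace G]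
    [ContinuousAdd G] {A : Set G} (hA : (interior A).Nonempty) : A - A ∈ 𝓝 0 := by
  obtain ⟨y, hy⟩ := hA
  filter_upwards [(continuous_add_const y).tendsto' 0 y (zero_add y)
    (isOpen_interior.mem_nhds hy)] with z hz
  exact ⟨z + y, interior_subset hz, y, interior_subset hy, add_sub_cancel_right z y⟩

theorem LinearMap.closure_image_mem_nhds_zero {R P M : Type*} [Ring R] [TopologicalSpace R]
    [AddCommGroup P] [Module R P] [TopologicalSpace P] [IsTopologicalAddGroup P]
    [ContinuousSMul R P] [AddCommGroup M] [Module R M] [TopologicalSpace M]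
    [IsTopologicalAddGroup M] [ContinuousConstSMul R M] [BaireSpace M]
    (hR : ∃ r : ℕ → Rˣ, Tendsto (fun n => (r n : R)) atTop (𝓝 0))
    (φ : P →ₗ[R] M) (hφ : Function.Surjective φ) {U : Set P} (hU : U ∈ 𝓝 0) :
    closure (φ '' U) ∈ 𝓝 0 := by
  obtain ⟨r, hr⟩ := hR
  obtain ⟨V, hV, hVU⟩ := exists_nhds_half_neg hU
  have habsorb : ∀ y, ∃ n, r n • y ∈ φ '' V := by
    intro y
    obtain ⟨c, rfl⟩ := hφ y
    have hc : Tendsto (fun n => (r n : R) • c) atTop (𝓝 0) := by simpa using hr.smul_const c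
    obtain ⟨n, hn⟩ := (hc.eventually_mem hV).exists
    exact ⟨n, _, hn, φ.map_smul _ c⟩
  refine mem_of_superset (sub_self_mem_nhds_zero_of_interior_nonempty
    (interior_closure_nonempty_of_forall_exists_smul_mem r habsorb)) ?_
  rintro _ ⟨a, ha, b, hb, rfl⟩
  exact map_mem_closure₂ continuous_sub ha hb fun _ ⟨v, hv, hva⟩ _ ⟨w, hw, hwb⟩ =>
    ⟨v - w, hVU v hv w hw, by rw [map_sub, hva, hwb]⟩

theorem sum_Ico_mem_of_add_subset {P : Type*} [AddCommMonoid P] {u : ℕ → Set P}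
    (hu : ∀ n, (0 : P) ∈ u n) (hadd : ∀ n, u (n + 1) + u (n + 1) ⊆ u n)
    {x : ℕ → P} (hx : ∀ n, x n ∈ u (n + 1)) (m n : ℕ) :
    ∑ i ∈ Finset.Ico m n, x i ∈ u m := by
  obtain h | ⟨d, rfl⟩ : n ≤ m ∨ ∃ d, n = m + d :=
    (le_total n m).imp id fun h => ⟨n - m, by omega⟩
  · simpa [Finset.Ico_eq_empty_of_le h] using hu m
  induction d generalizing m with
  | zero => simpa using hu m
  | succ d ih =>
    rw [Finset.sum_eq_sum_Ico_succ_bot (by omega), show m + (d + 1) = m + 1 + d by omega]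
    exact hadd m (add_mem_add (hx m) (ih (m + 1)))

theorem summable_of_mem_of_add_subset {P : Type*} [AddCommGroup P] [UniformSpace P]
    [IsUniformAddGroup P] [CompleteSpace P] {u : ℕ → Set P}
    (hu : ∀ n, (0 : P) ∈ u n) (hadd : ∀ n, u (n + 1) + u (n + 1) ⊆ u n)
    (hsmall : Tendsto u atTop (𝓝 0).smallSets) {x : ℕ → P} (hx : ∀ n, x n ∈ u (n + 1)) :
    Summable x := by
  classical
  refine summable_iff_vanishing.2 fun e he => ?_
  obtain ⟨m, hm⟩ := (tendsto_smallSets_iff.1 hsmall e he).exists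
  refine ⟨Finset.range m, fun t ht => ?_⟩
  obtain ⟨N, hN⟩ := t.exists_nat_subset_range
  have htIco : t ⊆ Finset.Ico m N := fun i hi => Finset.mem_Ico.2
    ⟨not_lt.1 fun h => Finset.disjoint_left.1 ht hi (Finset.mem_range.2 h),
      Finset.mem_range.1 (hN hi)⟩
  have := sum_Ico_mem_of_add_subset hu hadd (x := fun i => if i ∈ t then x i else 0)
    (fun n => by split_ifs; exacts [hx n, hu _]) m N
  rw [Finset.sum_ite_mem, Finset.inter_eq_right.2 htIco] at this
  exact hm this

theorem Filter.Tendsto.closure_image_smallSets {ι X Y : Type*} [TopologicalSpace X]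
    [TopologicalSpace Y] [RegularSpace Y] {l : Filter ι} {u : ι → Set X} {x : X}
    (hu : Tendsto u l (𝓝 x).smallSets) {f : X → Y} (hf : ContinuousAt f x) :
    Tendsto (fun i => closure (f '' u i)) l (𝓝 (f x)).smallSets := by
  refine tendsto_smallSets_iff.2 fun e he => ?_
  obtain ⟨e', he', he'c, he'e⟩ := exists_mem_nhds_isClosed_subset he
  filter_upwards [tendsto_smallSets_iff.1 hu _ (hf he')] with i hi
  exact (closure_minimal (image_subset_iff.2 hi) he'c).trans he'e

theorem AddMonoidHom.closure_image_subset_image_closure_of_add_subset {P M : Type*}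
    [AddCommGroup P] [UniformSpace P] [IsUniformAddGroup P] [CompleteSpace P]
    [AddCommGroup M] [TopologicalSpace M] [IsTopologicalAddGroup M] [T2Space M]
    (φ : P →+ M) (hφ : Continuous φ) {u : ℕ → Set P} (hu : ∀ n, (0 : P) ∈ u n)
    (hadd : ∀ n, u (n + 1) + u (n + 1) ⊆ u n) (hsmall : Tendsto u atTop (𝓝 0).smallSets)
    (hcl : ∀ n, closure (φ '' u n) ∈ 𝓝 0) :
    closure (φ '' u 1) ⊆ φ '' closure (u 0) := by
  intro y hy
  have hstep : ∀ n, ∀ z ∈ closure (φ '' u (n + 1)),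
      ∃ x ∈ u (n + 1), z - φ x ∈ closure (φ '' u (n + 2)) := by
    intro n z hz
    obtain ⟨_, ⟨x, hx, rfl⟩, hxz⟩ :=
      mem_closure_iff_nhds_zero.1 hz _ (neg_mem_nhds_zero M (hcl (n + 2)))
    exact ⟨x, hx, by simpa using hxz⟩
  choose! X hX using hstep
  let z : ℕ → M := fun n => n.rec y fun n z => z - φ (X n z)
  have hz : ∀ n, z n ∈ closure (φ '' u (n + 1)) := by
    intro n
    induction n with
    | zero => exact hy
    | succ n ih => exact (hX n (z n) ih).2
  let x : ℕ → P := fun n => X n (z n)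
  have hx : ∀ n, x n ∈ u (n + 1) := fun n => (hX n (z n) (hz n)).1
  have hz_eq : ∀ n, φ (∑ i ∈ Finset.range n, x i) = y - z n := by
    intro n
    induction n with
    | zero => simp [z]
    | succ n ih =>
      rw [Finset.sum_range_succ, map_add, ih]
      change _ = y - (z n - φ (x n))
      abel
  obtain ⟨ξ, hξ⟩ := summable_of_mem_of_add_subset hu hadd hsmall hx
  have hξu : ξ ∈ closure (u 0) := mem_closure_of_tendsto hξ.tendsto_sum_nat
    (Eventually.of_forall fun n => by
      rw [Finset.range_eq_Ico]
      exact sum_Ico_mem_of_add_subset hu hadd hx 0 n)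
  have hz0 : Tendsto z atTop (𝓝 0) := by
    simpa using ((hsmall.comp (tendsto_add_atTop_nat 1)).closure_image_smallSets
      hφ.continuousAt).of_smallSets (Eventually.of_forall hz)
  have hyξ : Tendsto (fun n => φ (∑ i ∈ Finset.range n, x i)) atTop (𝓝 y) := by
    simpa [hz_eq] using tendsto_const_nhds.sub hz0
  exact ⟨ξ, hξu, tendsto_nhds_unique ((hφ.tendsto ξ).comp hξ.tendsto_sum_nat) hyξ⟩

theorem AddMonoidHom.image_mem_nhds_zero_of_closure_image_mem_nhds_zero {P M : Type*}
    [AddCommGroup P] [UniformSpace P] [IsUniformAddGroup P] [CompleteSpace P]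
    [FirstCountableTopology P] [AddCommGroup M] [TopologicalSpace M] [IsTopologicalAddGroup M]
    [T2Space M] (φ : P →+ M) (hφ : Continuous φ)
    (hcl : ∀ U ∈ 𝓝 (0 : P), closure (φ '' U) ∈ 𝓝 0) {U : Set P} (hU : U ∈ 𝓝 0) :
    φ '' U ∈ 𝓝 0 := by
  obtain ⟨u, hu, hadd⟩ := IsTopologicalAddGroup.exists_antitone_basis_nhds_zero P
  obtain ⟨W, ⟨hW, hWc⟩, hWU⟩ := (closed_nhds_basis (0 : P)).mem_iff.1 hU
  obtain ⟨m, hm⟩ := (tendsto_smallSets_iff.1 hu.tendsto_smallSets W hW).exists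
  have hsub := φ.closure_image_subset_image_closure_of_add_subset hφ (u := fun n => u (m + n))
    (fun n => mem_of_mem_nhds (hu.mem _)) (fun n => hadd (m + n))
    (hu.tendsto_smallSets.comp (tendsto_atTop_mono (fun n => Nat.le_add_left n m) tendsto_id))
    (fun n => hcl _ (hu.mem _))
  exact mem_of_superset (hcl _ (hu.mem (m + 1)))
    (hsub.trans (image_mono ((closure_minimal hm hWc).trans hWU)))

theorem continuous_of_finite_general
    {R : Type*} [Ring R] [UniformSpace R] [IsTopologicalRing R] [IsUniformAddGroup R]
    [CompleteSpace R] [FirstCountableTopology R]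
    (hR : ∃ r : ℕ → Rˣ, Filter.Tendsto (fun n => (r n : R)) Filter.atTop (nhds 0))
    {M N : Type*}
    [AddCommGroup M] [Module R M] [UniformSpace M] [IsUniformAddGroup M]
    [ContinuousSMul R M] [T2Space M] [FirstCountableTopology M]
    [CompleteSpace M] [Module.Finite R M]
    [AddCommGroup N] [Module R N] [TopologicalSpace N] [IsTopologicalAddGroup N]
    [ContinuousSMul R N]
    (f : M →ₗ[R] N) :
    Continuous f := by
  have : (𝓤 M).IsCountablyGenerated := IsUniformAddGroup.uniformity_countably_generated
  have : BaireSpace M := inferInstance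
  obtain ⟨k, φ, hφ⟩ := Module.Finite.exists_fin' R M
  refine continuous_of_continuousAt_zero f fun V hV => mem_map.2 ?_
  rw [map_zero] at hV
  have hU : (f ∘ₗ φ) ⁻¹' V ∈ 𝓝 0 := (f ∘ₗ φ).continuous_on_pi.tendsto' 0 0 (map_zero _) hV
  exact mem_of_superset (φ.toAddMonoidHom.image_mem_nhds_zero_of_closure_image_mem_nhds_zero
    φ.continuous_on_pi (fun _ hU => φ.closure_image_mem_nhds_zero hR hφ hU) hU)
    (image_subset_iff.2 subset_rfl)

/-- Over a complete Hausdorff first-countable topological ring with a sequence of units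
converging to `0`, every linear map from a complete Hausdorff first-countable finitely
generated topological module to any topological module is continuous. -/
theorem continuous_of_finite
    {R : Type*} [Ring R] [UniformSpace R] [IsTopologicalRing R] [IsUniformAddGroup R]
    [CompleteSpace R] [T2Space R] [FirstCountableTopology R]
    (hR : ∃ r : ℕ → Rˣ, Filter.Tendsto (fun n => (r n : R)) Filter.atTop (nhds 0))
    {M N : Type*}
    [AddCommGroup M] [Module R M] [UniformSpace M] [IsUniformAddGroup M]
    [ContinuousSMul R M] [T2Space M] [FirstCountableTopology M]
    [CompleteSpace M] [Module.Finite R M]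
    [AddCommGroup N] [Module R N] [TopologicalSpace N] [IsTopologicalAddGroup N]
    [ContinuousSMul R N]
    (f : M →ₗ[R] N) :
    Continuous f :=
  continuous_of_finite_general hR f
end

section
/- Let R be a commutative complete Hausdorff non-archimedean topological ring with a countable fundamental system of open neighbourhoods of 0, and let R°° denote its set of topologically nilpotent elements. Let M be an R-module and N ⊆ M a submodule such that there exist m_1, …, m_l ∈ M with M = N + ∑_{i=1}^{l} R°°·m_i. Then N = M. -/
/-!
Writing `m i = ν i + ∑ j, c i j • m j` with `ν i ∈ N`, the vector `m` satisfies `(1 - C) m ∈ Nˡ`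
for the matrix `C = (c i j)`. The entries of `C ^ k` are sums of products of `k` entries of `C`.
Finitely many topologically nilpotent elements generate a relatively compact monoid, and a long
product contains a high power of a single entry, so these products tend to `0`; as the topology is
non-archimedean, so do the entries of `C ^ k`. Completeness then makes the Neumann series
`∑ C ^ k` converge to an inverse of `1 - C`, whence every `m i` lies in `N`.
-/

open Filter Topology Pointwise

section CommMonoidWithZero

variable {R : Type*} [CommMonoidWithZero R] [TopologicalSpace R] [ContinuousMul R]

theorem exists_isCompact_superset_submonoidClosure {S : Set R} (hS : S.Finite)
    (h : ∀ s ∈ S, IsTopologicallyNilpotent s) :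
    ∃ K, IsCompact K ∧ (Submonoid.closure S : Set R) ⊆ K := by
  induction S, hS using Set.Finite.induction_on with
  | empty => exact ⟨{1}, isCompact_singleton, by simp⟩
  | @insert a S _ _ ih =>
    obtain ⟨K, hK, hSK⟩ := ih fun s hs => h s (Set.mem_insert_of_mem a hs)
    refine ⟨insert 0 (Set.range (a ^ ·)) * K,
      (h a (Set.mem_insert a S)).isCompact_insert_range.mul hK, ?_⟩
    rw [Set.insert_eq, Submonoid.closure_union, Submonoid.coe_sup,
      ← Submonoid.powers_eq_closure, Submonoid.coe_powers]
    exact Set.mul_subset_mul (Set.subset_insert 0 _) hSK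

theorem eventually_pow_subset_of_isTopologicallyNilpotent {S : Set R} (hS : S.Finite)
    (h : ∀ s ∈ S, IsTopologicallyNilpotent s) {U : Set R} (hU : U ∈ 𝓝 0) :
    ∀ᶠ n in atTop, S ^ n ⊆ U := by
  obtain ⟨K, hK, hSK⟩ := exists_isCompact_superset_submonoidClosure hS h
  obtain ⟨V, hV, hKV⟩ := exists_mem_nhds_zero_mul_subset hK hU
  obtain ⟨k₀, hk₀⟩ := eventually_atTop.1 <|
    (hS.eventually_all (l := atTop)).2 fun s hs => (h s hs).eventually_mem hV
  classical
  have := hS.fintype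
  filter_upwards [eventually_gt_atTop (Fintype.card S * k₀)] with n hn x hx
  obtain ⟨f, rfl⟩ := Set.mem_pow.1 hx
  -- pigeonhole: some letter `s` occurs more than `k₀` times in the word `f`
  obtain ⟨s, hs⟩ := Fintype.exists_lt_card_fiber_of_mul_lt_card f (by simpa using hn)
  rw [List.prod_ofFn, ← Finset.prod_filter_not_mul_prod_filter Finset.univ (fun t => f t = s)]
  refine hKV (Set.mul_mem_mul (hSK ?_) ?_)
  · exact Submonoid.prod_mem _ fun t _ => Submonoid.subset_closure (f t).2
  · rw [Finset.prod_congr rfl fun t ht => congrArg Subtype.val (Finset.mem_filter.1 ht).2,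
      Finset.prod_const]
    exact hk₀ _ hs.le s s.2

end CommMonoidWithZero

theorem Matrix.pow_apply_mem_pow {R A n : Type*} [CommSemiring R] [Semiring A] [Algebra R A]
    [Fintype n] [DecidableEq n] {P : Submodule R A} {D : Matrix n n A}
    (hD : ∀ i j, D i j ∈ P) (k : ℕ) (i j : n) : (D ^ k) i j ∈ P ^ k := by
  induction k generalizing j with
  | zero =>
    rw [pow_zero, pow_zero, Matrix.one_apply]
    split_ifs
    · exact Submodule.one_le.1 le_rfl
    · exact zero_mem _
  | succ k ih =>
    rw [pow_succ, pow_succ, Matrix.mul_apply]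
    exact Submodule.sum_mem _ fun p _ => Submodule.mul_mem_mul (ih p) (hD p j)

theorem Summable.isUnit_one_sub {A : Type*} [Ring A] [TopologicalSpace A] [IsTopologicalRing A]
    [T2Space A] {x : A} (h : Summable (x ^ ·)) : IsUnit (1 - x) :=
  ⟨⟨1 - x, ∑' k, x ^ k, h.one_sub_mul_tsum_pow, h.tsum_pow_mul_one_sub⟩, rfl⟩

namespace Matrix

variable {n R : Type*} [Fintype n] [DecidableEq n]

theorem isTopologicallyNilpotent_of_forall_apply [CommRing R] [TopologicalSpace R]
    [NonarchimedeanRing R] {D : Matrix n n R} (hD : ∀ i j, IsTopologicallyNilpotent (D i j)) :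
    IsTopologicallyNilpotent D := by
  refine tendsto_pi_nhds.2 fun i => tendsto_pi_nhds.2 fun j => ?_
  intro U hU
  rw [Filter.mem_map]
  obtain ⟨W, hWU⟩ := NonarchimedeanRing.is_nonarchimedean U hU
  set S := Set.range fun p : n × n => D p.1 p.2
  have hS : S.Finite := Set.finite_range _
  filter_upwards [eventually_pow_subset_of_isTopologicallyNilpotent hS
    (Set.forall_mem_range.2 fun p => hD p.1 p.2) W.mem_nhds_zero] with k hk
  apply hWU
  have hmem := pow_apply_mem_pow (P := Submodule.span ℤ S)
    (fun i j => Submodule.subset_span ⟨(i, j), rfl⟩) k i j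
  rw [Submodule.span_pow] at hmem
  exact (Submodule.span_le (p := W.toAddSubgroup.toIntSubmodule)).2 hk hmem

theorem summable_pow_of_isTopologicallyNilpotent [Ring R] [UniformSpace R]
    [IsUniformAddGroup R] [NonarchimedeanRing R] [CompleteSpace R] {D : Matrix n n R}
    (hD : IsTopologicallyNilpotent D) : Summable (D ^ ·) :=
  Pi.summable.2 fun i => Pi.summable.2 fun j =>
    NonarchimedeanAddGroup.summable_of_tendsto_cofinite_zero <| by
      rw [Nat.cofinite_eq_atTop]
      exact tendsto_pi_nhds.1 (tendsto_pi_nhds.1 hD i) j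

end Matrix

theorem Submodule.mem_of_isUnit_of_forall_sum_smul_mem {R M ι : Type*} [Ring R]
    [AddCommMonoid M] [Module R M] [Fintype ι] [DecidableEq ι] {N : Submodule R M}
    {A : Matrix ι ι R} (hA : IsUnit A) {v : ι → M} (hv : ∀ i, ∑ j, A i j • v j ∈ N) (i : ι) :
    v i ∈ N := by
  obtain ⟨L, hL⟩ := hA.exists_left_inv
  have hvi : v i = ∑ k, L i k • ∑ j, A k j • v j := calc
    v i = ∑ j, (L * A) i j • v j := by simp [hL, Matrix.one_apply, ite_smul]
    _ = ∑ k, L i k • ∑ j, A k j • v j := by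
      simp only [Matrix.mul_apply, Finset.sum_smul, Finset.smul_sum, mul_smul]
      exact Finset.sum_comm
  rw [hvi]
  exact N.sum_mem fun k _ => N.smul_mem _ (hv k)

theorem submodule_eq_top_of_topNilpotent_span_general
    {R : Type*} [CommRing R] [UniformSpace R] [NonarchimedeanRing R]
    [IsUniformAddGroup R] [CompleteSpace R] [T2Space R]
    {M : Type*} [AddCommGroup M] [Module R M]
    (N : Submodule R M) (l : ℕ) (m : Fin l → M)
    (h : ∀ x : M, ∃ n ∈ N, ∃ c : Fin l → R,
      (∀ i, Filter.Tendsto (fun k => (c i) ^ k) Filter.atTop (nhds 0)) ∧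
      x = n + ∑ i, c i • m i) :
    N = ⊤ := by
  choose ν hν D hD hm using fun i => h (m i)
  have hunit : IsUnit (1 - Matrix.of D) :=
    (Matrix.summable_pow_of_isTopologicallyNilpotent
      (Matrix.isTopologicallyNilpotent_of_forall_apply hD)).isUnit_one_sub
  have hmN : ∀ i, m i ∈ N := Submodule.mem_of_isUnit_of_forall_sum_smul_mem hunit fun i => by
    have : ∑ j, (1 - Matrix.of D) i j • m j = ν i := by
      simp only [Matrix.sub_apply, Matrix.one_apply, Matrix.of_apply, sub_smul, ite_smul,
        one_smul, zero_smul, Finset.sum_sub_distrib, Finset.sum_ite_eq, Finset.mem_univ,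
        reduceIte]
      exact sub_eq_iff_eq_add.2 (hm i)
    exact this ▸ hν i
  refine Submodule.eq_top_iff'.2 fun x => ?_
  obtain ⟨n, hn, c, -, rfl⟩ := h x
  exact N.add_mem hn (N.sum_mem fun i _ => N.smul_mem _ (hmN i))

/-- Let `R` be a commutative complete Hausdorff non-archimedean first-countable
topological ring and `M` an `R`-module. If a submodule `N ⊆ M` satisfies
`M = N + ∑ R°° · mᵢ` for finitely many `mᵢ ∈ M`, then `N = M`. -/
theorem submodule_eq_top_of_topNilpotent_span
    {R : Type*} [CommRing R] [UniformSpace R] [NonarchimedeanRing R]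
    [IsUniformAddGroup R] [CompleteSpace R] [T2Space R]
    [FirstCountableTopology R]
    {M : Type*} [AddCommGroup M] [Module R M]
    (N : Submodule R M) (l : ℕ) (m : Fin l → M)
    (h : ∀ x : M, ∃ n ∈ N, ∃ c : Fin l → R,
      (∀ i, Filter.Tendsto (fun k => (c i) ^ k) Filter.atTop (nhds 0)) ∧
      x = n + ∑ i, c i • m i) :
    N = ⊤ :=
  submodule_eq_top_of_topNilpotent_span_general N l m h
end

section
/- Let R be a commutative complete Hausdorff non-archimedean topological ring with a countable fundamental system of open neighbourhoods of 0, admitting a sequence of units converging to 0, and such that the set R°° of topologically nilpotent elements is a neighbourhood of 0. Let M' be a metrisable complete topological R-module that is finitely generated as an R-module, and let M ⊆ M' be a dense submodule. Then M = M'. -/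
/-!
Choose generators `e₁, …, e_k` of `M'` and let `f : R^k → M'` be the continuous surjection
`c ↦ ∑ cᵢ eᵢ`. Multiplication by a topologically nilpotent unit `π` makes the image of any
open subgroup of `R^k` absorbing, so by Baire its closure is open; the successive-approximation
argument of the open mapping theorem, with series converging in the complete nonarchimedean
`R^k`, shows that `f` maps neighbourhoods of `0` to neighbourhoods of `0`. As `R°°` is a
neighbourhood of `0`, density of `M` gives `mᵢ ∈ M` with `mᵢ = eᵢ + ∑ Cᵢⱼ eⱼ` and `Cᵢⱼ ∈ R°°`.
Since `R°°` is a non-unital subring, `det (1 + C) ∈ 1 + R°°`, and `1 + R°°` consists of units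
(geometric series). So the `eᵢ` are `R`-combinations of the `mᵢ`.
-/

open Filter Topology Set

namespace IsTopologicallyNilpotent

theorem neg {R : Type*} [Ring R] [TopologicalSpace R] [ContinuousNeg R] {a : R}
    (ha : IsTopologicallyNilpotent a) : IsTopologicallyNilpotent (-a) := by
  have ha' : Tendsto (fun n : ℕ => -a ^ n) atTop (𝓝 0) := by simpa using Tendsto.neg ha
  refine fun s hs => show ∀ᶠ n in atTop, (-a) ^ n ∈ s from ?_
  filter_upwards [ha.eventually_mem hs, ha'.eventually_mem hs] with n h₁ h₂
  rcases neg_one_pow_eq_or R n with h | h <;> simpa [neg_pow a n, h]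

theorem mul {R : Type*} [CommMonoidWithZero R] [TopologicalSpace R] [ContinuousMul R] {a b : R}
    (ha : IsTopologicallyNilpotent a) (hb : IsTopologicallyNilpotent b) :
    IsTopologicallyNilpotent (a * b) := by
  simpa [IsTopologicallyNilpotent, mul_pow] using Tendsto.mul ha hb

theorem add_of_nonarchimedean {R : Type*} [CommRing R] [TopologicalSpace R] [NonarchimedeanRing R]
    {a b : R} (ha : IsTopologicallyNilpotent a) (hb : IsTopologicallyNilpotent b) :
    IsTopologicallyNilpotent (a + b) := by
  refine fun s hs => show ∀ᶠ n in atTop, (a + b) ^ n ∈ s from ?_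
  obtain ⟨U, hUs⟩ := NonarchimedeanRing.is_nonarchimedean s hs
  obtain ⟨V, hVU⟩ := NonarchimedeanRing.mul_subset U
  obtain ⟨N, hN⟩ := ((ha.eventually V.mem_nhds_zero).and
    (hb.eventually V.mem_nhds_zero)).exists_forall_of_atTop
  have hlow : ∀ᶠ m in atTop, ∀ j ∈ Finset.range N,
      a ^ j * b ^ m ∈ U ∧ b ^ j * a ^ m ∈ U := by
    refine (Finset.range N).eventually_all.2 fun j _ => ?_
    have h₁ : Tendsto (fun m => a ^ j * b ^ m) atTop (𝓝 0) := by
      simpa using hb.const_mul (a ^ j)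
    have h₂ : Tendsto (fun m => b ^ j * a ^ m) atTop (𝓝 0) := by
      simpa using ha.const_mul (b ^ j)
    exact (h₁.eventually U.mem_nhds_zero).and (h₂.eventually U.mem_nhds_zero)
  obtain ⟨M, hM⟩ := hlow.exists_forall_of_atTop
  -- In `a ^ j * b ^ (n - j)` both exponents are `≥ N`, or one is `< N` and the other `≥ M`.
  filter_upwards [eventually_ge_atTop (N + M)] with n hn
  refine hUs ?_
  rw [add_pow]
  refine sum_mem fun j hj => ?_
  rw [← nsmul_eq_mul']
  refine nsmul_mem ?_ _
  have hjn : j ≤ n := Nat.lt_succ_iff.1 (Finset.mem_range.1 hj)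
  by_cases hj : j < N
  · exact (hM (n - j) (by omega) j (Finset.mem_range.2 hj)).1
  by_cases hj' : n - j < N
  · rw [mul_comm]
    exact (hM j (by omega) (n - j) (Finset.mem_range.2 hj')).2
  exact hVU (Set.mul_mem_mul (hN j (by omega)).1 (hN (n - j) (by omega)).2)

theorem isUnit_one_sub {R : Type*} [Ring R] [UniformSpace R] [IsUniformAddGroup R]
    [NonarchimedeanRing R] [CompleteSpace R] [T2Space R] {a : R}
    (ha : IsTopologicallyNilpotent a) : IsUnit (1 - a) := by
  obtain ⟨s, hs⟩ : Summable (a ^ ·) :=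
    NonarchimedeanAddGroup.summable_of_tendsto_cofinite_zero (by rwa [Nat.cofinite_eq_atTop])
  have hshift : HasSum (fun n => a ^ (n + 1)) (s - 1) := by
    simpa using (hasSum_nat_add_iff' 1).2 hs
  have hl : a * s = s - 1 := (hs.mul_left a).unique (by simpa [pow_succ'] using hshift)
  have hr : s * a = s - 1 := (hs.mul_right a).unique (by simpa [pow_succ] using hshift)
  exact ⟨⟨1 - a, s, by rw [sub_mul, one_mul, hl, sub_sub_cancel],
    by rw [mul_sub, mul_one, hr, sub_sub_cancel]⟩, rfl⟩

end IsTopologicallyNilpotent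

def topologicallyNilpotentNonUnitalSubring (R : Type*) [CommRing R] [TopologicalSpace R]
    [NonarchimedeanRing R] : NonUnitalSubring R where
  carrier := {a | IsTopologicallyNilpotent a}
  zero_mem' := .zero
  add_mem' := .add_of_nonarchimedean
  neg_mem' := .neg
  mul_mem' := .mul

-- Compute in `ℤ ⊕ S`, where the `ℤ`-component of the determinant is `det 1 = 1`.
theorem NonUnitalSubring.det_one_add_sub_one_mem {R n : Type*} [CommRing R] [Fintype n]
    [DecidableEq n] (S : NonUnitalSubring R) (E : Matrix n n R) (hE : ∀ i j, E i j ∈ S) :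
    (1 + E).det - 1 ∈ S := by
  let E' : Matrix n n (Unitization ℤ S) := Matrix.of fun i j => ((⟨E i j, hE i j⟩ : S) : _)
  have hfst : (Unitization.fstHom ℤ S).toRingHom.mapMatrix (1 + E') = 1 := by
    ext i j
    rcases eq_or_ne i j with rfl | h <;> simp [E', Matrix.one_apply_ne, *]
  have hincl : (NonUnitalSubring.unitization S).toRingHom.mapMatrix (1 + E') = 1 + E := by
    ext i j
    rcases eq_or_ne i j with rfl | h <;> simp [E', Matrix.one_apply_ne, *]
  have h₁ : (1 + E').det.fst = 1 := by
    have h := RingHom.map_det (Unitization.fstHom ℤ S).toRingHom (1 + E')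
    rw [hfst, Matrix.det_one] at h
    simpa using h
  have h₂ := RingHom.map_det (NonUnitalSubring.unitization S).toRingHom (1 + E')
  rw [hincl] at h₂
  simp [← h₂, NonUnitalSubring.unitization_apply, h₁]

instance Pi.nonarchimedeanAddGroup {ι : Type*} [Finite ι] {G : ι → Type*}
    [∀ i, AddGroup (G i)] [∀ i, TopologicalSpace (G i)] [∀ i, NonarchimedeanAddGroup (G i)] :
    NonarchimedeanAddGroup (∀ i, G i) where
  is_nonarchimedean U hU := by
    rw [nhds_pi, Filter.mem_pi] at hU
    obtain ⟨I, -, t, ht, hIU⟩ := hU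
    choose V hV using fun i => NonarchimedeanAddGroup.is_nonarchimedean (t i) (ht i)
    refine ⟨⟨AddSubgroup.pi univ fun i => (V i).toAddSubgroup,
      isOpen_set_pi finite_univ fun i _ => (V i).isOpen⟩,
      fun x hx => hIU fun i _ => hV i (hx i trivial)⟩

theorem isOpen_closure_of_forall_exists_pow_smul_mem {Γ M : Type*} [Group Γ] [AddGroup M]
    [TopologicalSpace M] [IsTopologicalAddGroup M] [BaireSpace M] [MulAction Γ M]
    [ContinuousConstSMul Γ M] (g : Γ) (K : AddSubgroup M)
    (hK : ∀ x, ∃ n : ℕ, g ^ n • x ∈ K) :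
    IsOpen (closure (K : Set M)) := by
  obtain ⟨n, y, hy⟩ := nonempty_interior_of_iUnion_of_closed
    (f := fun n : ℕ => (g ^ n • ·) ⁻¹' closure (K : Set M))
    (fun n => isClosed_closure.preimage (continuous_const_smul _))
    (iUnion_eq_univ_iff.2 fun x => (hK x).imp fun n hn => subset_closure hn)
  have : closure (K : Set M) ∈ 𝓝 (g ^ n • y) :=
    mem_of_superset ((Homeomorph.smul (g ^ n)).isOpenMap.image_mem_nhds
      (mem_interior_iff_mem_nhds.1 hy)) (image_preimage_subset _ _)
  exact K.topologicalClosure.isOpen_of_mem_nhds this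

theorem exists_tendsto_sum_of_mem_closure_image {G H : Type*} [AddCommGroup H] [TopologicalSpace H]
    [IsTopologicalAddGroup H] [FirstCountableTopology H] (f : G → H) (W : ℕ → Set G)
    (hW : ∀ n, closure (f '' W (n + 1)) ∈ 𝓝 0) {x : H} (hx : x ∈ closure (f '' W 0)) :
    ∃ c : ℕ → G, (∀ n, c n ∈ W n) ∧
      Tendsto (fun n => ∑ m ∈ Finset.range n, f (c m)) atTop (𝓝 x) := by
  obtain ⟨t, ht⟩ := (𝓝 (0 : H)).exists_antitone_basis
  have : Nonempty G := by
    obtain ⟨-, c, -⟩ := closure_nonempty_iff.1 ⟨x, hx⟩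
    exact ⟨c⟩
  have step : ∀ n y, y ∈ closure (f '' W n) →
      ∃ c ∈ W n, y - f c ∈ closure (f '' W (n + 1)) ∩ t n := by
    intro n y hy
    have hN : closure (f '' W (n + 1)) ∩ t n ∈ 𝓝 0 := inter_mem (hW n) (ht.mem n)
    have hyN : (y - ·) ⁻¹' (closure (f '' W (n + 1)) ∩ t n) ∈ 𝓝 y :=
      (continuous_const.sub continuous_id).tendsto' y 0 (sub_self y) hN
    obtain ⟨-, hyc, c, hc, rfl⟩ := mem_closure_iff_nhds.1 hy _ hyN
    exact ⟨c, hc, hyc⟩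
  choose! c hcW hc using step
  let d : ℕ → H := fun n => Nat.rec x (fun m y => y - f (c m y)) n
  have hd : ∀ n, d n ∈ closure (f '' W n) := fun n =>
    Nat.rec hx (fun m ih => (hc m (d m) ih).1) n
  have hsum : ∀ n, ∑ m ∈ Finset.range n, f (c m (d m)) = x - d n := by
    intro n
    induction n with
    | zero => simp [d]
    | succ n ih => rw [Finset.sum_range_succ, ih]; simp only [d]; abel
  refine ⟨fun n => c n (d n), fun n => hcW n _ (hd n), ?_⟩
  have hd0 : Tendsto d atTop (𝓝 0) :=
    (tendsto_add_atTop_iff_nat 1).1 (ht.tendsto fun n => (hc n (d n) (hd n)).2)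
  simpa [hsum] using tendsto_const_nhds.sub hd0

theorem AddMonoidHom.image_mem_nhds_zero_of_forall_closure_image_mem_nhds_zero
    {G H : Type*} [AddCommGroup G] [UniformSpace G] [IsUniformAddGroup G]
    [NonarchimedeanAddGroup G] [CompleteSpace G] [FirstCountableTopology G]
    [AddCommGroup H] [TopologicalSpace H] [IsTopologicalAddGroup H] [T2Space H]
    [FirstCountableTopology H] (f : G →+ H) (hf : Continuous f)
    (h : ∀ U ∈ 𝓝 (0 : G), closure (f '' U) ∈ 𝓝 0) {U : Set G} (hU : U ∈ 𝓝 0) :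
    f '' U ∈ 𝓝 0 := by
  obtain ⟨W₀, hW₀U⟩ := NonarchimedeanAddGroup.is_nonarchimedean U hU
  obtain ⟨s, hs⟩ := (𝓝 (0 : G)).exists_antitone_basis
  choose W hW using fun n =>
    NonarchimedeanAddGroup.is_nonarchimedean _ (inter_mem W₀.mem_nhds_zero (hs.mem n))
  refine mem_of_superset (h _ (W 0).mem_nhds_zero) ?_
  intro x hx
  obtain ⟨c, hcW, hc⟩ := exists_tendsto_sum_of_mem_closure_image f (fun n => W n)
    (fun n => h _ (W (n + 1)).mem_nhds_zero) hx
  have hsum : Summable c := NonarchimedeanAddGroup.summable_of_tendsto_cofinite_zero <| by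
    rw [Nat.cofinite_eq_atTop]
    exact hs.tendsto fun n => (hW n (hcW n)).2
  have hmem : ∑' n, c n ∈ W₀ := W₀.isClosed.mem_of_tendsto hsum.hasSum.tendsto_sum_nat
    (Eventually.of_forall fun n => sum_mem fun m _ => (hW m (hcW m)).1)
  exact ⟨∑' n, c n, hW₀U hmem,
    tendsto_nhds_unique (hsum.hasSum.map f hf).tendsto_sum_nat hc⟩

theorem Fintype.linearCombination_image_mem_nhds_zero
    {R : Type*} [Ring R] [UniformSpace R] [NonarchimedeanRing R]
    [IsUniformAddGroup R] [CompleteSpace R] [FirstCountableTopology R]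
    {M : Type*} [AddCommGroup M] [Module R M] [UniformSpace M] [IsUniformAddGroup M]
    [ContinuousSMul R M] [T2Space M] [FirstCountableTopology M] [CompleteSpace M]
    {π : Rˣ} (hπ : IsTopologicallyNilpotent (π : R)) {ι : Type*} [Fintype ι] {e : ι → M}
    (he : Submodule.span R (range e) = ⊤) {U : Set (ι → R)} (hU : U ∈ 𝓝 0) :
    Fintype.linearCombination R e '' U ∈ 𝓝 0 := by
  -- makes the complete space `M` a Baire space
  have := IsUniformAddGroup.uniformity_countably_generated (α := M)
  set f := Fintype.linearCombination R e
  have hf : Continuous f := by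
    simp only [f]
    fun_prop
  have hsurj : Function.Surjective f := by
    rw [← LinearMap.range_eq_top, Fintype.range_linearCombination, he]
  refine f.toAddMonoidHom.image_mem_nhds_zero_of_forall_closure_image_mem_nhds_zero hf
    (fun V hV => ?_) hU
  obtain ⟨W, hWV⟩ := NonarchimedeanAddGroup.is_nonarchimedean V hV
  let K := W.toAddSubgroup.map f.toAddMonoidHom
  have hK : ∀ x, ∃ n : ℕ, π ^ n • x ∈ K := by
    intro x
    obtain ⟨a, rfl⟩ := hsurj x
    have ha : Tendsto (fun n : ℕ => (π : R) ^ n • a) atTop (𝓝 0) :=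
      tendsto_pi_nhds.2 fun i => by simpa using hπ.mul_const (a i)
    obtain ⟨n, hn⟩ := (ha.eventually W.mem_nhds_zero).exists
    exact ⟨n, _, hn, by simp [Units.smul_def]⟩
  exact mem_of_superset ((isOpen_closure_of_forall_exists_pow_smul_mem π K hK).mem_nhds
    (subset_closure K.zero_mem)) (closure_mono (image_mono hWV))

theorem Submodule.span_range_le_of_isUnit_det {R M ι : Type*} [CommRing R] [AddCommGroup M]
    [Module R M] [Fintype ι] [DecidableEq ι] {A : Matrix ι ι R} (hA : IsUnit A.det)
    {v w : ι → M} (h : ∀ i, w i = ∑ j, A i j • v j) :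
    span R (range v) ≤ span R (range w) := by
  refine span_le.2 (range_subset_iff.2 fun i => ?_)
  have hv : v i = ∑ j, A⁻¹ i j • w j := by
    simp_rw [h, Finset.smul_sum, smul_smul]
    rw [Finset.sum_comm]
    simp_rw [← Finset.sum_smul, ← Matrix.mul_apply, Matrix.nonsing_inv_mul A hA]
    simp [Matrix.one_apply]
  rw [hv]
  exact sum_mem fun j _ => smul_mem _ _ (subset_span (mem_range_self j))

/-- Let `R` be a commutative complete Hausdorff non-archimedean first-countable
topological ring with a sequence of units converging to `0` whose set of topologically
nilpotent elements is a neighbourhood of `0`. If `M'` is a metrisable complete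
topological `R`-module that is finitely generated, then every dense submodule `M ⊆ M'`
equals `M'`. -/
theorem dense_submodule_eq_top
    {R : Type*} [CommRing R] [UniformSpace R] [NonarchimedeanRing R]
    [IsUniformAddGroup R] [CompleteSpace R] [T2Space R]
    [FirstCountableTopology R]
    (hu : ∃ r : ℕ → Rˣ, Filter.Tendsto (fun n => (r n : R)) Filter.atTop (nhds 0))
    (hnil : {r : R | Filter.Tendsto (fun n => r ^ n) Filter.atTop (nhds 0)} ∈ nhds (0 : R))
    {M' : Type*} [AddCommGroup M'] [Module R M'] [UniformSpace M'] [IsUniformAddGroup M']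
    [ContinuousSMul R M'] [T2Space M'] [FirstCountableTopology M']
    [CompleteSpace M'] [Module.Finite R M']
    (M : Submodule R M') (hd : Dense (M : Set M')) :
    M = ⊤ := by
  obtain ⟨r, hr⟩ := hu
  obtain ⟨n, hπ⟩ := (hr.eventually hnil).exists
  obtain ⟨k, e, he⟩ := Module.Finite.exists_fin (R := R) (M := M')
  let T := topologicallyNilpotentNonUnitalSubring R
  have hV := Fintype.linearCombination_image_mem_nhds_zero hπ he
    (set_pi_mem_nhds finite_univ fun _ _ => hnil : univ.pi (fun _ => (T : Set R)) ∈ 𝓝 0)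
  have happrox : ∀ i, ∃ m ∈ M, ∃ c : Fin k → R, (∀ j, c j ∈ T) ∧
      Fintype.linearCombination R e c = m - e i := by
    intro i
    obtain ⟨m, hmM, c, hc, hcm⟩ := hd.inter_nhds_nonempty
      ((continuous_id.sub continuous_const).tendsto' (e i) 0 (sub_self _) hV)
    exact ⟨m, hmM, c, fun j => hc j trivial, hcm⟩
  choose m hmM C hCT hC using happrox
  have hdet : IsUnit (1 + Matrix.of C).det := by
    have h : IsTopologicallyNilpotent ((1 + Matrix.of C).det - 1) :=
      T.det_one_add_sub_one_mem _ hCT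
    simpa using h.neg.isUnit_one_sub
  refine eq_top_iff.2 (he ▸ (Submodule.span_range_le_of_isUnit_det hdet fun i => ?_).trans
    (Submodule.span_le.2 (range_subset_iff.2 hmM)))
  rw [← sub_add_cancel (m i) (e i), ← hC]
  simp [Fintype.linearCombination_apply, add_smul, Finset.sum_add_distrib, Matrix.one_apply,
    add_comm]
end
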